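/- arXiv:math/0409238 — 8 statements merged into one kernel-verified Lean document; each statement's English description precedes it below -/
import Mathlib

section
/- Let G(x,t), F(x,t) ∈ K[[x,t]] be formal power series such that G(x,0) = a·x + (higher order terms in x) with a ≠ 0. Let X = X(t) be the unique element of t·K[[t]] with G(X(t), t) = 0. Then the constant term in x of (x/G(x,t))·F(x,t), taken in the field where x/G(x,t) is expanded appropriately, equals F(X(t),t) / (∂G/∂x)(X(t),t). -/
/-!
Since `G(x, 0)` has a simple zero at `x = 0` and `G(X(t), t) = 0`, the `t`-coefficients of `U` in
`G = (x - X(t)) · U` can be solved for recursively in `K[[x]][[t]]`, and `U` is a unit. In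
`K((x))[[t]]` one has `x / (x - X) = ∑ₖ (X / x)ᵏ`, so the constant term in `x` of
`x / (x - X) · H` is `H(X(t), t)` for every `H ∈ K[[x]][[t]]`; take `H = F / U`. Finally
`∂G/∂x = U + (x - X) · ∂U/∂x`, whose value at `x = X(t)` is `U(X(t), t)`.
-/

open PowerSeries

noncomputable section

variable {K : Type*} [Field K] [CharZero K]

/-- Evaluation of a one-variable power series `f ∈ K[[x]]` at a power series
`X ∈ t·K[[t]]` of positive order: the coefficient of `t^M` only receives
contributions from the truncation at order `M`. -/
noncomputable def evalX (X : PowerSeries K) (f : PowerSeries K) : PowerSeries K :=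
  PowerSeries.mk fun M =>
    PowerSeries.coeff (R := K) M (∑ m ∈ Finset.range (M + 1), PowerSeries.C (R := K) (PowerSeries.coeff (R := K) m f) * X ^ m)

/-- For `F ∈ K[[x]][[t]]` (outer variable `t`, inner variable `x`), the series
`F(X(t), t) ∈ K[[t]]` obtained by substituting `x := X(t)` (with `X` of positive
order). -/
noncomputable def evalXt (X : PowerSeries K) (F : PowerSeries (PowerSeries K)) : PowerSeries K :=
  PowerSeries.mk fun M =>
    ∑ N ∈ Finset.range (M + 1),
      PowerSeries.coeff (R := K) (M - N) (evalX X (PowerSeries.coeff (R := PowerSeries K) N F))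

/-- Derivative with respect to the inner variable `x` of `G ∈ K[[x]][[t]]`. -/
noncomputable def dX (G : PowerSeries (PowerSeries K)) : PowerSeries (PowerSeries K) :=
  PowerSeries.mk fun N => PowerSeries.derivativeFun (PowerSeries.coeff (R := PowerSeries K) N G)

namespace PowerSeries

open Finset

section CommSemiring

variable {R : Type*} [CommSemiring R]

/-- `∑ₙ Qₙ(t) sⁿ ↦ ∑ₙ Qₙ(t) tⁿ`. -/
def evalAtX : R⟦X⟧⟦X⟧ →+* R⟦X⟧ where
  toFun Q := mk fun M => ∑ p ∈ antidiagonal M, coeff p.2 (coeff p.1 Q)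
  map_one' := by
    ext M
    simp only [coeff_mk, coeff_one, apply_ite, map_zero]
    split_ifs <;> simp_all [Nat.sum_antidiagonal_eq_sum_range_succ_mk]
  map_mul' P Q := by
    ext M
    simp only [coeff_mk, coeff_mul, map_sum, sum_mul_sum, sum_sigma']
    -- Both sides sum over 2 × 2 matrices of naturals with entry sum `M`; transposing matches
    -- their terms.
    let transpose (x : Σ _ : ℕ × ℕ, Σ _ : ℕ × ℕ, ℕ × ℕ) :
        Σ _ : ℕ × ℕ, Σ _ : ℕ × ℕ, ℕ × ℕ :=
      ⟨(x.2.1.1 + x.2.2.1, x.2.1.2 + x.2.2.2), (x.2.1.1, x.2.2.1), (x.2.1.2, x.2.2.2)⟩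
    refine sum_nbij' transpose transpose ?_ ?_ ?_ ?_ ?_
    all_goals
      rintro ⟨⟨a, b⟩, ⟨c, d⟩, ⟨e, f⟩⟩ h
      simp_all [transpose] <;> omega
  map_zero' := by
    ext M
    simp
  map_add' P Q := by
    ext M
    simp [sum_add_distrib]

theorem coeff_evalAtX (Q : R⟦X⟧⟦X⟧) (M : ℕ) :
    coeff M (evalAtX Q) = ∑ p ∈ antidiagonal M, coeff p.2 (coeff p.1 Q) := by
  simp only [evalAtX, RingHom.coe_mk, MonoidHom.coe_mk, OneHom.coe_mk, coeff_mk]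

@[simp]
theorem evalAtX_C (f : R⟦X⟧) : evalAtX (C f) = f := by
  ext M
  simp [coeff_evalAtX, coeff_C, apply_ite, Nat.sum_antidiagonal_eq_sum_range_succ_mk]

@[simp]
theorem evalAtX_map_C (f : R⟦X⟧) : evalAtX (map C f) = f := by
  ext M
  rw [coeff_evalAtX, sum_eq_single (M, 0)] <;> aesop (add simp coeff_C)

theorem lt_order_pow_of_constantCoeff_eq_zero {w : R⟦X⟧} (hw : constantCoeff w = 0) {n m : ℕ}
    (h : n < m) : (n : ℕ∞) < (w ^ m).order :=
  (Nat.cast_lt.mpr h).trans_le (le_order_pow_of_constantCoeff_eq_zero m hw)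

end CommSemiring

section CommRing

variable {R : Type*} [CommRing R]

def xSub (Y : R⟦X⟧) : R⟦X⟧⟦X⟧ := C X - map C Y

theorem coeff_xSub_of_ne_zero (Y : R⟦X⟧) {n : ℕ} (hn : n ≠ 0) :
    coeff n (xSub Y) = -C (coeff n Y) := by
  simp [xSub, coeff_C, hn]

theorem constantCoeff_xSub {Y : R⟦X⟧} (hY : constantCoeff Y = 0) :
    constantCoeff (xSub Y) = X := by
  rw [xSub, map_sub, constantCoeff_C, ← coeff_zero_eq_constantCoeff_apply, coeff_map,
    coeff_zero_eq_constantCoeff_apply, hY, map_zero, sub_zero]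

/-- Solving `G = (x - Y)·U + c` for the `t`-coefficients `Uₙ ∈ R⟦x⟧`, `cₙ ∈ R` amounts to
`x·Uₙ + cₙ = Gₙ + ∑_{i<n} Y_{n-i}·Uᵢ`; this is the right-hand side. -/
def divXSubNumerator (G : R⟦X⟧⟦X⟧) (Y : R⟦X⟧) (n : ℕ) : R⟦X⟧ :=
  coeff n G +
    ∑ i : Fin n, C (coeff (n - i) Y) * mk fun p => coeff (p + 1) (divXSubNumerator G Y i)
termination_by n
decreasing_by exact i.isLt

theorem divXSubNumerator_eq (G : R⟦X⟧⟦X⟧) (Y : R⟦X⟧) (n : ℕ) :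
    divXSubNumerator G Y n = coeff n G + ∑ i ∈ range n,
      C (coeff (n - i) Y) * mk fun p => coeff (p + 1) (divXSubNumerator G Y i) := by
  rw [divXSubNumerator, Fin.sum_univ_eq_sum_range
    (fun i => C (coeff (n - i) Y) * mk fun p => coeff (p + 1) (divXSubNumerator G Y i))]

theorem exists_eq_xSub_mul_add_map_C (G : R⟦X⟧⟦X⟧) {Y : R⟦X⟧} (hY : constantCoeff Y = 0) :
    ∃ U c, G = xSub Y * U + map C c := by
  obtain ⟨U, hU⟩ : ∃ U : R⟦X⟧⟦X⟧,
      ∀ i, mk (fun p => coeff (p + 1) (divXSubNumerator G Y i)) = coeff i U :=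
    ⟨mk fun i => mk fun p => coeff (p + 1) (divXSubNumerator G Y i), fun i => by rw [coeff_mk]⟩
  refine ⟨U, mk fun n => constantCoeff (divXSubNumerator G Y n), ?_⟩
  ext1 n
  have hsplit := eq_X_mul_shift_add_const (divXSubNumerator G Y n)
  have hrec := divXSubNumerator_eq G Y n
  simp only [hU] at hsplit hrec
  have hsum : ∑ i ∈ range n, coeff i U * coeff (n - i) (xSub Y) =
      -∑ i ∈ range n, C (coeff (n - i) Y) * coeff i U := by
    rw [← sum_neg_distrib]
    refine sum_congr rfl fun i hi => ?_
    rw [coeff_xSub_of_ne_zero _ (by simp at hi; omega)]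
    ring
  rw [map_add, mul_comm, coeff_mul,
    Nat.sum_antidiagonal_eq_sum_range_succ (fun i j => coeff i U * coeff j (xSub Y)),
    sum_range_succ, hsum, Nat.sub_self, coeff_zero_eq_constantCoeff_apply,
    constantCoeff_xSub hY, coeff_map, coeff_mk]
  linear_combination hsplit - hrec

end CommRing

section Field

variable {k : Type*} [Field k]

theorem coeff_inv_one_sub {w : k⟦X⟧} (hw : constantCoeff w = 0) (n : ℕ) :
    coeff n (1 - w)⁻¹ = ∑ i ∈ range (n + 1), coeff n (w ^ i) := by
  have hunit : constantCoeff (1 - w) ≠ 0 := by simp [hw]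
  have hgeom : ∑ i ∈ range (n + 1), w ^ i = (1 - w)⁻¹ * (1 - w ^ (n + 1)) := by
    rw [← mul_neg_geom_sum, ← mul_assoc, PowerSeries.inv_mul_cancel _ hunit, one_mul]
  rw [← map_sum, hgeom, mul_sub, mul_one, map_sub,
    coeff_mul_of_lt_order (lt_order_pow_of_constantCoeff_eq_zero hw n.lt_succ_self), sub_zero]

theorem isUnit_of_coeff_one_constantCoeff_xSub_mul_ne_zero {Y : k⟦X⟧} (hY : constantCoeff Y = 0)
    {U : k⟦X⟧⟦X⟧} (h : coeff 1 (constantCoeff (xSub Y * U)) ≠ 0) : IsUnit U := by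
  rwa [map_mul, constantCoeff_xSub hY, coeff_succ_X_mul, coeff_zero_eq_constantCoeff_apply,
    ← isUnit_iff_ne_zero, ← isUnit_iff_constantCoeff, ← isUnit_iff_constantCoeff] at h

end Field

end PowerSeries

section

open Finset

variable {k : Type*} [Field k]

theorem evalX_eq_subst {Y : k⟦X⟧} (hY : constantCoeff Y = 0) (f : k⟦X⟧) :
    evalX Y f = f.subst Y := by
  ext M
  rw [coeff_subst' (HasSubst.of_constantCoeff_zero' hY),
    finsum_eq_sum_of_support_subset (s := range (M + 1))]
  · simp [evalX, coeff_C_mul]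
  · intro m hm
    contrapose hm
    have hlt : M < m := by simpa using hm
    simp [coeff_of_lt_order M (lt_order_pow_of_constantCoeff_eq_zero hY hlt)]

def evalXtHom {Y : k⟦X⟧} (hY : constantCoeff Y = 0) : k⟦X⟧⟦X⟧ →+* k⟦X⟧ :=
  evalAtX.comp (map (substAlgHom (R := k) (HasSubst.of_constantCoeff_zero' hY)).toRingHom)

@[simp]
theorem evalXtHom_apply {Y : k⟦X⟧} (hY : constantCoeff Y = 0) (F : k⟦X⟧⟦X⟧) :
    evalXtHom hY F = evalXt Y F := by
  ext M
  simp [evalXtHom, evalXt, coeff_evalAtX, Nat.sum_antidiagonal_eq_sum_range_succ_mk,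
    coe_substAlgHom, evalX_eq_subst hY]

theorem evalXtHom_map_C {Y : k⟦X⟧} (hY : constantCoeff Y = 0) (g : k⟦X⟧) :
    evalXtHom hY (map C g) = g := by
  have hC : (substAlgHom (R := k) (HasSubst.of_constantCoeff_zero' hY)).toRingHom.comp C = C :=
    RingHom.ext fun c => by simp [coe_substAlgHom, subst_C]; rfl
  rw [evalXtHom, RingHom.comp_apply, ← RingHom.comp_apply (map _), ← map_comp, hC, evalAtX_map_C]

theorem evalXtHom_C_X {Y : k⟦X⟧} (hY : constantCoeff Y = 0) : evalXtHom hY (C X) = Y := by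
  simp [evalXtHom, coe_substAlgHom, subst_X (HasSubst.of_constantCoeff_zero' hY)]

theorem evalXtHom_xSub {Y : k⟦X⟧} (hY : constantCoeff Y = 0) : evalXtHom hY (xSub Y) = 0 := by
  rw [xSub, map_sub, evalXtHom_C_X, evalXtHom_map_C, sub_self]

theorem exists_eq_xSub_mul_of_evalXt_eq_zero {G : k⟦X⟧⟦X⟧} {Y : k⟦X⟧} (hY : constantCoeff Y = 0)
    (hG : evalXt Y G = 0) : ∃ U, G = xSub Y * U := by
  obtain ⟨U, c, rfl⟩ := exists_eq_xSub_mul_add_map_C G hY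
  rw [← evalXtHom_apply hY, map_add, map_mul, evalXtHom_xSub hY, zero_mul, zero_add,
    evalXtHom_map_C] at hG
  exact ⟨U, by rw [hG, map_zero, add_zero]⟩

theorem coeff_dX (A : k⟦X⟧⟦X⟧) (n : ℕ) : coeff n (dX A) = derivative k (coeff n A) :=
  coeff_mk _ _

theorem dX_mul (A B : k⟦X⟧⟦X⟧) : dX (A * B) = dX A * B + A * dX B := by
  ext n : 1
  simp only [coeff_dX, coeff_mul, map_add, map_sum, ← sum_add_distrib, Derivation.leibniz,
    smul_eq_mul]
  exact sum_congr rfl fun p _ => by ring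

@[simp]
theorem dX_xSub (Y : k⟦X⟧) : dX (xSub Y) = 1 := by
  ext n : 1
  rcases eq_or_ne n 0 with rfl | hn
  · rw [coeff_dX, xSub, map_sub, coeff_zero_C, coeff_map, map_sub, derivative_X, derivative_C,
      sub_zero, coeff_zero_one]
  · simp [coeff_dX, coeff_xSub_of_ne_zero Y hn, hn]

def constTerm (S : (LaurentSeries k)⟦X⟧) : k⟦X⟧ := mk fun n => (coeff n S).coeff 0

theorem constantCoeff_C_mul_map_C (a : LaurentSeries k) {Y : k⟦X⟧} (hY : constantCoeff Y = 0) :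
    constantCoeff (C a * map HahnSeries.C Y) = 0 := by
  rw [map_mul, ← coeff_zero_eq_constantCoeff_apply (map _ Y), coeff_map,
    coeff_zero_eq_constantCoeff_apply, hY, map_zero, mul_zero]

theorem constTerm_inv_one_sub_mul {Y : k⟦X⟧} (hY : constantCoeff Y = 0) (H : k⟦X⟧⟦X⟧) :
    constTerm ((1 - C (HahnSeries.single (-1) 1) * map HahnSeries.C Y)⁻¹ *
      map (HahnSeries.ofPowerSeries ℤ k) H) = evalXt Y H := by
  set w := C (HahnSeries.single (-1 : ℤ) (1 : k)) * map HahnSeries.C Y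
  have hw : constantCoeff w = 0 := constantCoeff_C_mul_map_C _ hY
  have hwpow (i u : ℕ) : coeff u (w ^ i) = HahnSeries.single (-(i : ℤ)) (coeff u (Y ^ i)) := by
    rw [mul_pow, ← map_pow C, ← map_pow (PowerSeries.map _), coeff_C_mul, coeff_map,
      HahnSeries.single_pow, HahnSeries.C_apply, HahnSeries.single_mul_single]
    simp
  -- `(1 - Y/x)⁻¹ = ∑ᵢ Yⁱ x⁻ⁱ`, and the constant term pairs `x⁻ⁱ` with the `xⁱ`-coefficient of `H`.
  ext M
  rw [constTerm, coeff_mk, coeff_mul, HahnSeries.coeff_sum, evalXt, coeff_mk,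
    ← Nat.sum_antidiagonal_eq_sum_range_succ (fun N j => coeff j (evalX Y (coeff N H))),
    ← Nat.sum_antidiagonal_swap]
  refine sum_congr rfl fun p _ => ?_
  simp only [coeff_inv_one_sub hw, hwpow, sum_mul, HahnSeries.coeff_sum, coeff_map, evalX, coeff_mk,
    map_sum, coeff_C_mul, Prod.fst_swap, Prod.snd_swap]
  refine sum_congr rfl fun i _ => ?_
  rw [← add_neg_cancel (i : ℤ), HahnSeries.coeff_single_mul_add,
    HahnSeries.ofPowerSeries_apply_coeff, mul_comm]

theorem constTerm_mul_inv_map_xSub_mul {Y : k⟦X⟧} (hY : constantCoeff Y = 0) {U V : k⟦X⟧⟦X⟧}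
    (hUV : U * V = 1) (F : k⟦X⟧⟦X⟧) :
    constTerm ((C (HahnSeries.single 1 1) * map (HahnSeries.ofPowerSeries ℤ k) F) *
      (map (HahnSeries.ofPowerSeries ℤ k) (xSub Y * U))⁻¹) = evalXt Y (F * V) := by
  set ι := HahnSeries.ofPowerSeries ℤ k
  set ξ : LaurentSeries k := HahnSeries.single 1 1
  set ξinv : LaurentSeries k := HahnSeries.single (-1) 1
  set w := C ξinv * map HahnSeries.C Y
  have hξ : ξ * ξinv = 1 := by simp [ξ, ξinv, HahnSeries.single_mul_single]
  have hxSub : map ι (xSub Y) = C ξ * (1 - w) := by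
    have hιC : ι.comp C = HahnSeries.C := RingHom.ext HahnSeries.ofPowerSeries_C
    rw [xSub, map_sub, map_C, HahnSeries.ofPowerSeries_X, ← RingHom.comp_apply (map ι),
      ← map_comp, hιC, mul_sub, mul_one, ← mul_assoc, ← map_mul, hξ, map_one C, one_mul]
  have hw : constantCoeff (1 - w) ≠ 0 := by
    rw [map_sub, map_one, constantCoeff_C_mul_map_C _ hY, sub_zero]
    exact one_ne_zero
  have hinv : (C ξinv * (1 - w)⁻¹ * map ι V) * map ι (xSub Y * U) = 1 := by
    calc _ = C (ξ * ξinv) * ((1 - w)⁻¹ * (1 - w)) * map ι (U * V) := by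
          rw [map_mul, hxSub, map_mul, map_mul]; ring
      _ = 1 := by rw [hξ, PowerSeries.inv_mul_cancel _ hw, hUV, map_one, map_one, one_mul, one_mul]
  have hne : constantCoeff (map ι (xSub Y * U)) ≠ 0 :=
    right_ne_zero_of_mul_eq_one (by rw [← map_mul, hinv, map_one])
  have hrearr : (C ξ * map ι F) * (C ξinv * (1 - w)⁻¹ * map ι V) = (1 - w)⁻¹ * map ι (F * V) := by
    calc _ = C (ξ * ξinv) * ((1 - w)⁻¹ * (map ι F * map ι V)) := by rw [map_mul]; ring
      _ = _ := by rw [hξ, map_one, one_mul, map_mul]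
  rw [(inv_eq_iff_mul_eq_one hne).mpr hinv, hrearr, constTerm_inv_one_sub_mul hY]

end

theorem lagrange_constant_term_eval_general
    (G F : PowerSeries (PowerSeries K))
    (ha : PowerSeries.coeff (R := K) 1 (PowerSeries.constantCoeff (R := PowerSeries K) G) ≠ 0)
    (X : PowerSeries K)
    (hX0 : PowerSeries.constantCoeff (R := K) X = 0)
    (hXroot : evalXt X G = 0) :
    (PowerSeries.mk fun n =>
        (PowerSeries.coeff (R := LaurentSeries K) n
          ((PowerSeries.C (R := LaurentSeries K) (HahnSeries.single (1 : ℤ) (1 : K)) *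
              PowerSeries.map (HahnSeries.ofPowerSeries ℤ K) F) *
            (PowerSeries.map (HahnSeries.ofPowerSeries ℤ K) G)⁻¹)).coeff 0)
      * evalXt X (dX G) = evalXt X F := by
  obtain ⟨U, rfl⟩ := exists_eq_xSub_mul_of_evalXt_eq_zero hX0 hXroot
  obtain ⟨V, hUV⟩ := (isUnit_of_coeff_one_constantCoeff_xSub_mul_ne_zero hX0 ha).exists_right_inv
  have hdX : evalXt X (dX (xSub X * U)) = evalXt X U := by
    simp only [dX_mul, dX_xSub, ← evalXtHom_apply hX0, map_add, map_mul, evalXtHom_xSub hX0,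
      zero_mul, add_zero, one_mul]
  change constTerm _ * _ = _
  rw [constTerm_mul_inv_map_xSub_mul hX0 hUV, hdX, ← evalXtHom_apply hX0, ← evalXtHom_apply hX0,
    ← map_mul, mul_assoc, mul_comm V, hUV, mul_one, evalXtHom_apply]

/-- **A generalization of the Lagrange inversion formula** (Theorem 2.4).
Let `G(x,t), F(x,t) ∈ K[[x,t]]`, viewed as elements of `K[[x]][[t]]` with outer
variable `t`.  Suppose `G(x,0) = a·x + (higher order terms in x)` with `a ≠ 0`,
and let `X = X(t) ∈ t·K[[t]]` be the (unique) such root of `G(X(t),t) = 0`.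
Expanding `(x/G(x,t))·F(x,t)` as a Laurent series in `x` with coefficients in
`K[[t]]` (possible since `G(x,0)` has order `1` in `x`, so `G` is invertible
over `K((x))[[t]]`), its constant term in `x` satisfies
`CT_x (x/G)·F = F(X(t),t) / (∂G/∂x)(X(t),t)`, stated in cross-multiplied form. -/
theorem lagrange_constant_term_eval
    (G F : PowerSeries (PowerSeries K))
    (h0 : PowerSeries.coeff (R := K) 0 (PowerSeries.constantCoeff (R := PowerSeries K) G) = 0)
    (ha : PowerSeries.coeff (R := K) 1 (PowerSeries.constantCoeff (R := PowerSeries K) G) ≠ 0)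
    (X : PowerSeries K)
    (hX0 : PowerSeries.constantCoeff (R := K) X = 0)
    (hXroot : evalXt X G = 0) :
    (PowerSeries.mk fun n =>
        (PowerSeries.coeff (R := LaurentSeries K) n
          ((PowerSeries.C (R := LaurentSeries K) (HahnSeries.single (1 : ℤ) (1 : K)) *
              PowerSeries.map (HahnSeries.ofPowerSeries ℤ K) F) *
            (PowerSeries.map (HahnSeries.ofPowerSeries ℤ K) G)⁻¹)).coeff 0)
      * evalXt X (dX G) = evalXt X F :=
  lagrange_constant_term_eval_general G F ha X hX0 hXroot
end
end

section
/- Let H be a free monoid and ρ: H → ℤ a monoid homomorphism (a Gessel pair). Define: π is a minus-path if π is the identity or ρ(π) is negative and strictly less than ρ of every other H-head of π; π is a zero-path if ρ(π) = 0 and every H-head of π has nonnegative ρ-value; π is a plus-path if every H-head of π other than the identity has positive ρ-value. Then every element π ∈ H has a unique factorization π = π₋ π₀ π₊ with π₋ a minus-path, π₀ a zero-path, and π₊ a plus-path. -/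
/-- The value under the homomorphism induced by `ρ : α → ℤ` of an element of
the free monoid on `α` (represented as a list of its prime factors). -/
def rhoVal {α : Type*} (ρ : α → ℤ) (l : List α) : ℤ := (l.map ρ).sum

/-- `π` is a *minus-path*: it is the identity, or its `ρ`-value is negative and
strictly less than the `ρ`-values of all its other `H`-heads (the `H`-heads of
`π = h₁⋯h_m` being the prefixes `h₁⋯h_i`, `i = 0,…,m`). -/
def IsMinusPath {α : Type*} (ρ : α → ℤ) (l : List α) : Prop :=
  l = [] ∨ (rhoVal ρ l < 0 ∧ ∀ i < l.length, rhoVal ρ l < rhoVal ρ (l.take i))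

/-- `π` is a *zero-path*: its `ρ`-value is `0` and every `H`-head has
nonnegative `ρ`-value. -/
def IsZeroPath {α : Type*} (ρ : α → ℤ) (l : List α) : Prop :=
  rhoVal ρ l = 0 ∧ ∀ i : ℕ, 0 ≤ rhoVal ρ (l.take i)

/-- `π` is a *plus-path*: every `H`-head other than the identity has positive
`ρ`-value. -/
def IsPlusPath {α : Type*} (ρ : α → ℤ) (l : List α) : Prop :=
  ∀ i : ℕ, 0 < i → i ≤ l.length → 0 < rhoVal ρ (l.take i)

/-!
Read `π` as a lattice path whose heights are the `ρ`-values of its heads. The minus-path `π₋`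
ends at the first head of minimal height and the zero-path `π₀` at the last one; the remainder
`π₊` stays strictly above that minimum. Uniqueness holds because no nonempty piece can be
moved across either cut: moving it across the first cut would contradict the strict minimality
of `π₋`, and moving it across the second one would give a nonempty head of `π₊` of height `0`.
-/

namespace List

theorem prefix_append_cases {α : Type*} {p a r : List α} (h : p <+: a ++ r) :
    p <+: a ∨ ∃ t, t <+: r ∧ p = a ++ t := by
  obtain ⟨s, hs⟩ := h
  rcases append_eq_append_iff.1 hs with ⟨u, rfl, -⟩ | ⟨t, rfl, rfl⟩
  · exact Or.inl (prefix_append p u)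
  · exact Or.inr ⟨t, prefix_append t s, rfl⟩

theorem eq_of_append_eq_append_of_no_shift {α : Type*} {P Q : List α → Prop}
    (no_shift : ∀ a d r, P a → P (a ++ d) → Q (d ++ r) → d = [])
    {a r a' r' : List α} (ha : P a) (hr : Q r) (ha' : P a') (hr' : Q r')
    (h : a ++ r = a' ++ r') : a = a' ∧ r = r' := by
  rcases append_eq_append_iff.1 h with ⟨d, rfl, rfl⟩ | ⟨d, rfl, rfl⟩
  · obtain rfl := no_shift a d r' ha ha' hr
    simp
  · obtain rfl := no_shift a' d r ha' ha hr'
    simp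

end List

open List

section GesselPair

variable {α : Type*} {ρ : α → ℤ}

@[simp]
theorem rhoVal_nil : rhoVal ρ [] = 0 := rfl

@[simp]
theorem rhoVal_append (l₁ l₂ : List α) : rhoVal ρ (l₁ ++ l₂) = rhoVal ρ l₁ + rhoVal ρ l₂ := by
  simp [rhoVal]

def IsNonnegPath (ρ : α → ℤ) (l : List α) : Prop :=
  ∀ p, p <+: l → 0 ≤ rhoVal ρ p

theorem isMinusPath_iff_forall_prefix {l : List α} :
    IsMinusPath ρ l ↔ ∀ p, p <+: l → p ≠ l → rhoVal ρ l < rhoVal ρ p := by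
  constructor
  · rintro (rfl | ⟨-, h⟩) p hp hne
    · exact absurd (prefix_nil.1 hp) hne
    · have hlt : p.length < l.length :=
        lt_of_le_of_ne hp.length_le fun heq => hne (hp.eq_of_length heq)
      simpa [← prefix_iff_eq_take.1 hp] using h _ hlt
  · intro h
    rcases eq_or_ne l [] with rfl | hne
    · exact Or.inl rfl
    · refine Or.inr ⟨h [] nil_prefix hne.symm, fun i hi => h _ (take_prefix i l) fun heq => ?_⟩
      have := congrArg length heq
      simp only [length_take] at this
      omega

theorem isZeroPath_iff {l : List α} : IsZeroPath ρ l ↔ rhoVal ρ l = 0 ∧ IsNonnegPath ρ l := by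
  refine and_congr_right fun _ => ⟨fun h p hp => ?_, fun h i => h _ (take_prefix i l)⟩
  rw [prefix_iff_eq_take.1 hp]
  exact h _

theorem isPlusPath_iff_forall_prefix {l : List α} :
    IsPlusPath ρ l ↔ ∀ p, p <+: l → p ≠ [] → 0 < rhoVal ρ p := by
  constructor
  · intro h p hp hne
    rw [prefix_iff_eq_take.1 hp]
    exact h _ (length_pos_iff.2 hne) hp.length_le
  · intro h i hi hil
    exact h _ (take_prefix i l) (by simp [Nat.pos_iff_ne_zero.1 hi, ne_nil_of_length_pos (hi.trans_le hil)])

theorem IsNonnegPath.of_prefix {l₁ l₂ : List α} (h : IsNonnegPath ρ l₂) (h₁₂ : l₁ <+: l₂) :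
    IsNonnegPath ρ l₁ :=
  fun p hp => h p (hp.trans h₁₂)

theorem IsMinusPath.rhoVal_le_of_prefix {a r p : List α} (ha : IsMinusPath ρ a)
    (hr : IsNonnegPath ρ r) (hp : p <+: a ++ r) : rhoVal ρ a ≤ rhoVal ρ p := by
  rcases prefix_append_cases hp with hpa | ⟨t, ht, rfl⟩
  · rcases eq_or_ne p a with rfl | hne
    · exact le_rfl
    · exact (isMinusPath_iff_forall_prefix.1 ha p hpa hne).le
  · simpa using hr t ht

theorem IsZeroPath.isNonnegPath_append {b c : List α} (hb : IsZeroPath ρ b)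
    (hc : IsPlusPath ρ c) : IsNonnegPath ρ (b ++ c) := by
  obtain ⟨hb0, hb⟩ := isZeroPath_iff.1 hb
  intro p hp
  rcases prefix_append_cases hp with hpb | ⟨t, ht, rfl⟩
  · exact hb p hpb
  · rcases eq_or_ne t [] with rfl | hne
    · simp [hb0]
    · simpa [hb0] using (isPlusPath_iff_forall_prefix.1 hc t ht hne).le

theorem exists_minusPath_append_nonnegPath (π : List α) :
    ∃ a r, IsMinusPath ρ a ∧ IsNonnegPath ρ r ∧ π = a ++ r := by
  induction π using reverseRecOn with
  | nil => exact ⟨[], [], Or.inl rfl, fun p hp => by simp [prefix_nil.1 hp], rfl⟩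
  | append_singleton π x ih =>
    obtain ⟨a, r, ha, hr, rfl⟩ := ih
    by_cases hlow : rhoVal ρ (a ++ r ++ [x]) < rhoVal ρ a
    · refine ⟨a ++ r ++ [x], [], isMinusPath_iff_forall_prefix.2 fun p hp hne => ?_,
        fun p hp => by simp [prefix_nil.1 hp], by simp⟩
      have hpπ : p <+: a ++ r := (prefix_concat_iff.1 hp).resolve_left hne
      exact hlow.trans_le (ha.rhoVal_le_of_prefix hr hpπ)
    · refine ⟨a, r ++ [x], ha, fun p hp => ?_, by simp⟩
      rcases prefix_concat_iff.1 hp with rfl | hpr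
      · simp only [rhoVal_append] at hlow ⊢
        omega
      · exact hr p hpr

theorem exists_zeroPath_append_plusPath {r : List α} (hr : IsNonnegPath ρ r) :
    ∃ b c, IsZeroPath ρ b ∧ IsPlusPath ρ c ∧ r = b ++ c := by
  induction r using reverseRecOn with
  | nil =>
    exact ⟨[], [], isZeroPath_iff.2 ⟨rfl, hr⟩,
      isPlusPath_iff_forall_prefix.2 fun p hp hne => absurd (prefix_nil.1 hp) hne, rfl⟩
  | append_singleton r x ih =>
    obtain ⟨b, c, hb, hc, rfl⟩ := ih (hr.of_prefix (prefix_append _ _))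
    by_cases hzero : rhoVal ρ (b ++ c ++ [x]) = 0
    · refine ⟨b ++ c ++ [x], [], isZeroPath_iff.2 ⟨hzero, hr⟩,
        isPlusPath_iff_forall_prefix.2 fun p hp hne => absurd (prefix_nil.1 hp) hne, by simp⟩
    · have hpos : 0 < rhoVal ρ (b ++ c ++ [x]) := lt_of_le_of_ne (hr _ prefix_rfl) (Ne.symm hzero)
      refine ⟨b, c ++ [x], hb, isPlusPath_iff_forall_prefix.2 fun p hp hne => ?_, by simp⟩
      rcases prefix_concat_iff.1 hp with rfl | hpc
      · have hb0 := (isZeroPath_iff.1 hb).1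
        simp only [rhoVal_append] at hpos ⊢
        omega
      · exact isPlusPath_iff_forall_prefix.1 hc p hpc hne

theorem minusPath_append_nonnegPath_unique {a r a' r' : List α} (ha : IsMinusPath ρ a)
    (hr : IsNonnegPath ρ r) (ha' : IsMinusPath ρ a') (hr' : IsNonnegPath ρ r')
    (h : a ++ r = a' ++ r') : a = a' ∧ r = r' := by
  refine eq_of_append_eq_append_of_no_shift (fun a d r _ had hdr => ?_) ha hr ha' hr' h
  by_contra hne
  have hlt := isMinusPath_iff_forall_prefix.1 had a (prefix_append a d) (by simpa using hne)
  have hd := hdr d (prefix_append d r)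
  simp only [rhoVal_append] at hlt
  omega

theorem zeroPath_append_plusPath_unique {b c b' c' : List α} (hb : IsZeroPath ρ b)
    (hc : IsPlusPath ρ c) (hb' : IsZeroPath ρ b') (hc' : IsPlusPath ρ c')
    (h : b ++ c = b' ++ c') : b = b' ∧ c = c' := by
  refine eq_of_append_eq_append_of_no_shift (fun b d c hb hbd hdc => ?_) hb hc hb' hc' h
  by_contra hne
  have hpos := isPlusPath_iff_forall_prefix.1 hdc d (prefix_append d c) hne
  have hbd0 := hbd.1
  simp only [rhoVal_append, hb.1, zero_add] at hbd0
  omega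

end GesselPair

/-- **Factorization lemma for Gessel pairs** (Lemma 3.1).
Let `(H, ρ)` be a Gessel pair: a free monoid `H` (realized as the lists of
prime factors, i.e. the free monoid on the set `α` of primes) together with a
monoid homomorphism `ρ : H → ℤ` (induced by `ρ : α → ℤ`).  Then every `π ∈ H`
has a unique factorization `π = π₋ π₀ π₊` with `π₋` a minus-path, `π₀` a
zero-path, and `π₊` a plus-path. -/
theorem gessel_pair_unique_factorization {α : Type*} (ρ : α → ℤ) (π : List α) :
    ∃! p : List α × List α × List α,
      IsMinusPath ρ p.1 ∧ IsZeroPath ρ p.2.1 ∧ IsPlusPath ρ p.2.2 ∧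
      π = p.1 ++ p.2.1 ++ p.2.2 := by
  obtain ⟨a, r, ha, hr, rfl⟩ := exists_minusPath_append_nonnegPath (ρ := ρ) π
  obtain ⟨b, c, hb, hc, rfl⟩ := exists_zeroPath_append_plusPath hr
  refine ⟨(a, b, c), ⟨ha, hb, hc, (append_assoc a b c).symm⟩, ?_⟩
  rintro ⟨a', b', c'⟩ ⟨ha', hb', hc', h⟩
  rw [append_assoc] at h
  obtain ⟨rfl, hbc⟩ := minusPath_append_nonnegPath_unique ha' (hb'.isNonnegPath_append hc') ha
    (hb.isNonnegPath_append hc) h.symm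
  obtain ⟨rfl, rfl⟩ := zeroPath_append_plusPath_unique hb' hc' hb hc hbc
  rfl
end

section
/- Let r ≥ 1 and let Y(t) ∈ t·K[[t]] be the unique formal power series with zero constant term satisfying Y(t) = t(1 + Y(t)^{r+1}). Then the generating function F(t) of paths with steps (1,r) and (1,-1) from the origin that end on the x-axis and stay weakly above it satisfies F(t) = Y(t)/t. -/
/-- The number of paths of length `n` with steps `(1,r)` and `(1,-1)` (recorded
by their `y`-displacements `r` and `-1`) that end on the `x`-axis and stay
weakly above it. -/
noncomputable def dyckCount (r n : ℕ) : ℕ :=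
  Nat.card {l : List ℤ // l.length = n ∧ (∀ s ∈ l, s = (r : ℤ) ∨ s = -1) ∧
    l.sum = 0 ∧ ∀ i : ℕ, 0 ≤ (l.take i).sum}

/-!
Let `G_k` count the paths with steps `r` and `-1` from height `k` down to `0` that stay weakly
above `0`, so that `F = G_0`. A nonempty path from height `0` starts with a step up to height `r`,
so `G_0 = 1 + t G_r`. A path from height `k + 1` splits at its first step below its starting
height into a path returning to its starting height without going below it, a step `-1`, and a
path from height `k`; so `G_{k+1} = t G_0 G_k`. Hence `G_k = (t G_0)^k G_0`, and `Z = t F` solves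
`Z = t (1 + Z^{r+1})`. That equation has only one solution in `K[[t]]`: any two solutions satisfy
`Z₁ - Z₂ = t S (Z₁ - Z₂)` for some `S`, and `1 - t S` is a unit.
-/

open PowerSeries in
theorem PowerSeries.eq_of_eq_X_mul_one_add_pow {R : Type*} [CommRing R] (m : ℕ)
    {Z₁ Z₂ : R⟦X⟧} (h₁ : Z₁ = X * (1 + Z₁ ^ m)) (h₂ : Z₂ = X * (1 + Z₂ ^ m)) :
    Z₁ = Z₂ := by
  obtain ⟨S, hS⟩ := sub_dvd_pow_sub_pow Z₁ Z₂ m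
  have hunit : IsUnit (1 - X * S) := by simp [isUnit_iff_constantCoeff]
  have hzero : (Z₁ - Z₂) * (1 - X * S) = 0 := by linear_combination h₁ - h₂ + X * hS
  exact sub_eq_zero.mp (hunit.mul_left_eq_zero.mp hzero)

namespace List

theorem finite_length_eq_of_forall_mem {α : Type*} {S : Set α} (hS : S.Finite) (n : ℕ) :
    {l : List α | l.length = n ∧ ∀ a ∈ l, a ∈ S}.Finite := by
  have := hS.to_subtype
  refine ((List.finite_length_eq S n).image (List.map Subtype.val)).subset ?_
  rintro l ⟨hl, hmem⟩
  lift l to List S using hmem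
  exact ⟨l, by simpa using hl, rfl⟩

theorem exists_eq_append_neg_one_cons {c : ℤ} (hc : 0 ≤ c) {l : List ℤ}
    (hl : ∀ s ∈ l, -1 ≤ s) (hsum : c + l.sum < 0) :
    ∃ D t, l = D ++ -1 :: t ∧ c + D.sum = 0 ∧ ∀ i, 0 ≤ c + (D.take i).sum := by
  induction l generalizing c with
  | nil => simp only [sum_nil] at hsum; omega
  | cons a l ih =>
    by_cases h : c = 0 ∧ a = -1
    · exact ⟨[], l, by simp [h.2], by simp [h.1], by simp [h.1]⟩
    · have ha := hl a mem_cons_self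
      obtain ⟨D, t, rfl, hD, hpre⟩ := ih (c := c + a) (by omega)
        (fun s hs => hl s (mem_cons_of_mem a hs)) (by simpa [add_assoc] using hsum)
      refine ⟨a :: D, t, rfl, by simpa [add_assoc] using hD, ?_⟩
      rintro (_ | i)
      · simpa using hc
      · simpa [add_assoc] using hpre i

theorem length_le_of_append_neg_one_cons_eq {D D' t t' : List ℤ} (hD : D.sum = 0)
    (hD' : ∀ i, 0 ≤ (D'.take i).sum) (h : D ++ -1 :: t = D' ++ -1 :: t') :
    D'.length ≤ D.length := by
  by_contra! hlt
  have hleft : ((D ++ -1 :: t).take (D.length + 1)).sum = -1 := by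
    simp [take_append, take_of_length_le (Nat.le_succ _), hD]
  have hright : (D' ++ -1 :: t').take (D.length + 1) = D'.take (D.length + 1) := by
    simp [take_append, Nat.sub_eq_zero_of_le hlt]
  have := hD' (D.length + 1)
  rw [h, hright] at hleft
  omega

theorem append_neg_one_cons_inj {D D' t t' : List ℤ} (hD : D.sum = 0) (hD' : D'.sum = 0)
    (hpD : ∀ i, 0 ≤ (D.take i).sum) (hpD' : ∀ i, 0 ≤ (D'.take i).sum)
    (h : D ++ -1 :: t = D' ++ -1 :: t') : D = D' ∧ t = t' := by
  obtain ⟨rfl, htt'⟩ := append_inj h <| le_antisymm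
    (length_le_of_append_neg_one_cons_eq hD' hpD h.symm)
    (length_le_of_append_neg_one_cons_eq hD hpD' h)
  exact ⟨rfl, (cons_inj_right _).1 htt'⟩

end List

namespace RDyck

open PowerSeries Finset.HasAntidiagonal

/-- The steps of a path with steps `r` and `-1` from height `k` down to `0` that stays weakly
above `0`, heights being measured from the starting point. -/
def IsDescent (r k : ℕ) (l : List ℤ) : Prop :=
  (∀ s ∈ l, s = r ∨ s = -1) ∧ l.sum = -k ∧ ∀ i, -(k : ℤ) ≤ (l.take i).sum

abbrev Descents (r k n : ℕ) : Type := {l : List ℤ // l.length = n ∧ IsDescent r k l}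

instance (r k n : ℕ) : Finite (Descents r k n) :=
  Set.Finite.to_subtype <|
    (List.finite_length_eq_of_forall_mem (S := {(r : ℤ), -1}) (Set.toFinite _) n).subset
      fun _ hl => ⟨hl.1, hl.2.1⟩

variable {r k : ℕ}

theorem card_descents_zero_zero (r : ℕ) : Nat.card (Descents r 0 0) = 1 := by
  have : Unique (Descents r 0 0) :=
    ⟨⟨⟨[], rfl, by simp [IsDescent]⟩⟩,
      fun ⟨_, hl, _⟩ => Subtype.ext (List.length_eq_zero_iff.mp hl)⟩
  exact Nat.card_unique

theorem card_descents_succ_zero (r k : ℕ) : Nat.card (Descents r (k + 1) 0) = 0 := by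
  have : IsEmpty (Descents r (k + 1) 0) :=
    ⟨fun ⟨l, hl, _, hsum, _⟩ => by simp [List.length_eq_zero_iff.mp hl] at hsum; omega⟩
  exact Nat.card_of_isEmpty

theorem isDescent_zero_cons_iff {a : ℤ} {l : List ℤ} :
    IsDescent r 0 (a :: l) ↔ a = r ∧ IsDescent r r l := by
  simp only [IsDescent, List.forall_mem_cons, List.sum_cons, Nat.cast_zero, neg_zero]
  constructor
  · rintro ⟨⟨ha, hl⟩, hsum, hpre⟩
    obtain rfl : a = r := ha.resolve_right fun h => by simpa [h] using hpre 1
    refine ⟨rfl, hl, by omega, fun i => ?_⟩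
    have := hpre (i + 1)
    simp only [List.take_succ_cons, List.sum_cons] at this
    omega
  · rintro ⟨rfl, hl, hsum, hpre⟩
    refine ⟨⟨Or.inl rfl, hl⟩, by omega, ?_⟩
    rintro (_ | i)
    · simp
    · have := hpre i
      simp only [List.take_succ_cons, List.sum_cons]
      omega

theorem card_descents_zero_succ (r n : ℕ) :
    Nat.card (Descents r 0 (n + 1)) = Nat.card (Descents r r n) := by
  refine (Nat.card_eq_of_bijective (fun l : Descents r r n =>
    ⟨(r : ℤ) :: l.1, by simp [l.2.1], isDescent_zero_cons_iff.mpr ⟨rfl, l.2.2⟩⟩)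
    ⟨?_, ?_⟩).symm
  · intro l l' h
    exact Subtype.ext (List.cons_injective (congrArg Subtype.val h))
  · rintro ⟨_ | ⟨a, l⟩, hl, hd⟩
    · simp at hl
    · obtain ⟨rfl, hl'⟩ := isDescent_zero_cons_iff.mp hd
      exact ⟨⟨l, by simpa using hl, hl'⟩, rfl⟩

theorem IsDescent.append_neg_one_cons {D t : List ℤ} (hD : IsDescent r 0 D)
    (ht : IsDescent r k t) : IsDescent r (k + 1) (D ++ -1 :: t) := by
  obtain ⟨hDs, hDsum, hDpre⟩ := hD
  obtain ⟨hts, htsum, htpre⟩ := ht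
  simp only [Nat.cast_zero, neg_zero] at hDsum hDpre
  refine ⟨?_, ?_, fun i => ?_⟩
  · simp only [List.mem_append, List.mem_cons]
    rintro s (hs | rfl | hs)
    exacts [hDs s hs, Or.inr rfl, hts s hs]
  · simp [hDsum, htsum]
  · have hDi := hDpre i
    have htail : -((k : ℤ) + 1) ≤ ((-1 :: t).take (i - D.length)).sum := by
      rcases i - D.length with _ | m
      · simp
      · have := htpre m
        simp only [List.take_succ_cons, List.sum_cons]
        omega
    rw [List.take_append, List.sum_append]
    push_cast
    omega

theorem IsDescent.exists_eq_append_neg_one_cons {l : List ℤ} (h : IsDescent r (k + 1) l) :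
    ∃ D t, l = D ++ -1 :: t ∧ IsDescent r 0 D ∧ IsDescent r k t := by
  obtain ⟨hs, hsum, hpre⟩ := h
  obtain ⟨D, t, rfl, hD, hDpre⟩ := List.exists_eq_append_neg_one_cons le_rfl
    (fun s hs' => by rcases hs s hs' with rfl | rfl <;> omega) (by omega)
  simp only [zero_add] at hD hDpre
  simp only [List.mem_append, List.mem_cons] at hs
  refine ⟨D, t, rfl, ⟨fun s h => hs s (Or.inl h), by simpa using hD, by simpa using hDpre⟩,
    fun s h => hs s (Or.inr (Or.inr h)), ?_, fun i => ?_⟩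
  · simp [hD] at hsum; omega
  · have := hpre (D.length + (i + 1))
    simp [List.take_length_add_append, hD] at this
    omega

/-- Its inverse cuts a path at its first step below the starting height. -/
def joinAtFirstPassage (r k m : ℕ) :
    (Σ p : antidiagonal m, Descents r 0 p.1.1 × Descents r k p.1.2) →
      Descents r (k + 1) (m + 1) :=
  fun ⟨p, D, t⟩ => ⟨D.1 ++ -1 :: t.1,
    by have := mem_antidiagonal.mp p.2; simp [D.2.1, t.2.1]; omega,
    D.2.2.append_neg_one_cons t.2.2⟩

theorem joinAtFirstPassage_bijective (r k m : ℕ) :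
    Function.Bijective (joinAtFirstPassage r k m) := by
  constructor
  · rintro ⟨⟨p, _⟩, ⟨D, hDn, hD⟩, ⟨t, htn, _⟩⟩
      ⟨⟨q, _⟩, ⟨D', hDn', hD'⟩, ⟨t', htn', _⟩⟩ h
    have hsum : ∀ {D : List ℤ}, IsDescent r 0 D → D.sum = 0 := fun hD => by simpa using hD.2.1
    have hpre : ∀ {D : List ℤ}, IsDescent r 0 D → ∀ i, 0 ≤ (D.take i).sum :=
      fun hD i => by simpa using hD.2.2 i
    obtain ⟨rfl, rfl⟩ := List.append_neg_one_cons_inj (hsum hD) (hsum hD') (hpre hD) (hpre hD')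
      (congrArg Subtype.val h)
    obtain rfl : p = q := Prod.ext (hDn.symm.trans hDn') (htn.symm.trans htn')
    rfl
  · rintro ⟨l, hl, hP⟩
    obtain ⟨D, t, rfl, hD, ht⟩ := hP.exists_eq_append_neg_one_cons
    have hlen : D.length + t.length = m := by simp at hl; omega
    exact ⟨⟨⟨(D.length, t.length), mem_antidiagonal.mpr hlen⟩, ⟨D, rfl, hD⟩,
      ⟨t, rfl, ht⟩⟩, rfl⟩

theorem card_descents_succ_succ (r k m : ℕ) :
    Nat.card (Descents r (k + 1) (m + 1)) =
      ∑ p ∈ antidiagonal m, Nat.card (Descents r 0 p.1) * Nat.card (Descents r k p.2) := by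
  rw [← Nat.card_eq_of_bijective _ (joinAtFirstPassage_bijective r k m), Nat.card_sigma]
  simp only [Nat.card_prod]
  exact Finset.sum_coe_sort (antidiagonal m)
    fun p => Nat.card (Descents r 0 p.1) * Nat.card (Descents r k p.2)

section Series

variable {K : Type*} [CommSemiring K]

noncomputable def descentSeries (r k : ℕ) : K⟦X⟧ :=
  mk fun n => (Nat.card (Descents r k n) : K)

theorem descentSeries_succ (r k : ℕ) :
    (descentSeries r (k + 1) : K⟦X⟧) = X * (descentSeries r 0 * descentSeries r k) := by
  ext (_ | m)
  · simp [descentSeries, card_descents_succ_zero]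
  · rw [coeff_succ_X_mul, coeff_mul]
    simp [descentSeries, card_descents_succ_succ]

theorem descentSeries_zero (r : ℕ) :
    (descentSeries r 0 : K⟦X⟧) = 1 + X * descentSeries r r := by
  ext (_ | n)
  · simp [descentSeries, card_descents_zero_zero]
  · simp [descentSeries, coeff_succ_X_mul, coeff_one, card_descents_zero_succ]

theorem descentSeries_eq_pow (r k : ℕ) :
    (descentSeries r k : K⟦X⟧) = (X * descentSeries r 0) ^ k * descentSeries r 0 := by
  induction k with
  | zero => simp
  | succ k ih => rw [descentSeries_succ, ih]; ring

theorem X_mul_descentSeries_zero (r : ℕ) :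
    (X * descentSeries r 0 : K⟦X⟧) = X * (1 + (X * descentSeries r 0) ^ (r + 1)) := by
  conv_lhs => rw [descentSeries_zero, descentSeries_eq_pow r r]
  ring

end Series

theorem dyckCount_eq_card_descents (r n : ℕ) : dyckCount r n = Nat.card (Descents r 0 n) := by
  simp [dyckCount, Descents, IsDescent]

end RDyck

theorem dyck_gf_eq_Y_div_t_general {K : Type*} [Field K]
    (r : ℕ) (Y : PowerSeries K)
    (hY : Y = PowerSeries.X * (1 + Y ^ (r + 1))) :
    PowerSeries.X * (PowerSeries.mk fun n => (dyckCount r n : K)) = Y := by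
  have hF : (PowerSeries.mk fun n => (dyckCount r n : K)) = RDyck.descentSeries r 0 := by
    simp only [RDyck.descentSeries, RDyck.dyckCount_eq_card_descents]
  rw [hF]
  exact PowerSeries.eq_of_eq_X_mul_one_add_pow (r + 1) (RDyck.X_mul_descentSeries_zero r) hY

/-- **Example 3.4 (computation of `Γ(H₀)`).**
Let `K` be a field of characteristic `0`, let `r ≥ 1`, and let
`Y(t) ∈ t·K[[t]]` be the unique power series with zero constant term
satisfying `Y(t) = t(1 + Y(t)^{r+1})`.  Then the generating function `F(t)` of
paths with steps `(1,r)` and `(1,-1)` that end on the `x`-axis and stay weakly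
above it satisfies `F(t) = Y(t)/t`, i.e. `t·F(t) = Y(t)`. -/
theorem dyck_gf_eq_Y_div_t {K : Type*} [Field K] [CharZero K]
    (r : ℕ) (hr : 1 ≤ r) (Y : PowerSeries K)
    (hY0 : PowerSeries.constantCoeff Y = 0)
    (hY : Y = PowerSeries.X * (1 + Y ^ (r + 1))) :
    PowerSeries.X * (PowerSeries.mk fun n => (dyckCount r n : K)) = Y :=
  dyck_gf_eq_Y_div_t_general r Y hY
end

section
/- The set of lattice paths with steps in a finite set 𝔖 ⊆ ℤ² starting at (0,0) that end on the x-axis is a free monoid, whose primes are exactly those paths that touch the x-axis only at the starting point and the ending point. -/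
def IsPrimeIn {α : Type*} (M : Set (List α)) (p : List α) : Prop :=
  p ∈ M ∧ p ≠ [] ∧ ∀ a b : List α, a ∈ M → b ∈ M → a ++ b = p → a = [] ∨ b = []

def IsFreeSubmonoid {α : Type*} (M : Set (List α)) : Prop :=
  [] ∈ M ∧ (∀ a ∈ M, ∀ b ∈ M, a ++ b ∈ M) ∧
    ∀ x ∈ M, ∃! L : List (List α), (∀ q ∈ L, IsPrimeIn M q) ∧ L.flatten = x

namespace PathsFreeAux

abbrev M (S : Finset (ℤ × ℤ)) : Set (List (ℤ × ℤ)) :=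
  {l : List (ℤ × ℤ) | (∀ s ∈ l, s ∈ S) ∧ (l.map Prod.snd).sum = 0}

lemma prime_iff (S : Finset (ℤ × ℤ)) (p : List (ℤ × ℤ)) :
    IsPrimeIn (M S) p ↔ ((∀ s ∈ p, s ∈ S) ∧ (p.map Prod.snd).sum = 0 ∧ p ≠ [] ∧
      ∀ i : ℕ, 0 < i → i < p.length → ((p.take i).map Prod.snd).sum ≠ 0) := by
  constructor
  · rintro ⟨⟨hS, hsum⟩, hne, hp⟩
    refine ⟨hS, hsum, hne, ?_⟩
    intro i hi hil hzero
    have ha : p.take i ∈ M S := ⟨fun s hs => hS s (List.mem_of_mem_take hs), hzero⟩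
    have hb : p.drop i ∈ M S := by
      refine ⟨fun s hs => hS s (List.mem_of_mem_drop hs), ?_⟩
      have h2 := hsum
      rw [← List.take_append_drop i p, List.map_append, List.sum_append, hzero] at h2
      simpa using h2
    rcases hp _ _ ha hb (List.take_append_drop i p) with h | h
    · have h2 : (p.take i).length = 0 := by rw [h]; rfl
      rw [List.length_take] at h2
      omega
    · have h2 : (p.drop i).length = 0 := by rw [h]; rfl
      rw [List.length_drop] at h2
      omega
  · rintro ⟨hS, hsum, hne, hmin⟩
    refine ⟨⟨hS, hsum⟩, hne, ?_⟩
    intro a b ha hb hab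
    by_contra hcon
    push_neg at hcon
    obtain ⟨ha0, hb0⟩ := hcon
    have hlen : a.length < p.length := by
      have h1 := congrArg List.length hab
      simp at h1
      have h2 : 0 < b.length := List.length_pos_iff.mpr hb0
      omega
    have htake : p.take a.length = a := by
      rw [← hab]; simp
    exact hmin a.length (List.length_pos_iff.mpr ha0) hlen (by rw [htake]; exact ha.2)

lemma exists_fact (S : Finset (ℤ × ℤ)) :
    ∀ n (x : List (ℤ × ℤ)), x.length ≤ n → x ∈ M S →
      ∃ L : List (List (ℤ × ℤ)), (∀ q ∈ L, IsPrimeIn (M S) q) ∧ L.flatten = x := by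
  intro n
  induction n with
  | zero =>
      intro x hx _
      have hx0 : x = [] := List.eq_nil_of_length_eq_zero (by omega)
      exact ⟨[], by simp, by simp [hx0]⟩
  | succ n ih =>
      intro x hx hxm
      rcases eq_or_ne x [] with rfl | hne
      · exact ⟨[], by simp, by simp⟩
      · have hlen : 0 < x.length := List.length_pos_iff.mpr hne
        have hP : ∃ i, 0 < i ∧ ((x.take i).map Prod.snd).sum = 0 :=
          ⟨x.length, hlen, by simpa using hxm.2⟩
        classical
        set i := Nat.find hP with hi_def
        obtain ⟨hi0, hisum⟩ := Nat.find_spec hP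
        have hile : i ≤ x.length :=
          Nat.find_le ⟨hlen, by simpa using hxm.2⟩
        have hprime : IsPrimeIn (M S) (x.take i) := by
          rw [prime_iff]
          refine ⟨fun s hs => hxm.1 s (List.mem_of_mem_take hs), hisum, ?_, ?_⟩
          · apply List.ne_nil_of_length_pos
            rw [List.length_take]
            omega
          · intro j hj0 hjl hjsum
            rw [List.length_take] at hjl
            have hji : j < i := by omega
            have : (x.take i).take j = x.take j := by
              rw [List.take_take]
              congr 1
              omega
            rw [this] at hjsum
            exact Nat.find_min hP hji ⟨hj0, hjsum⟩
        have hdropmem : x.drop i ∈ M S := by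
          refine ⟨fun s hs => hxm.1 s (List.mem_of_mem_drop hs), ?_⟩
          have h2 := hxm.2
          rw [← List.take_append_drop i x, List.map_append, List.sum_append, hisum] at h2
          simpa using h2
        have hdroplen : (x.drop i).length ≤ n := by
          rw [List.length_drop]
          omega
        obtain ⟨L', hL', hflat⟩ := ih (x.drop i) hdroplen hdropmem
        refine ⟨x.take i :: L', ?_, ?_⟩
        · intro q hq
          rcases List.mem_cons.mp hq with rfl | hq
          · exact hprime
          · exact hL' q hq
        · simp [hflat]

lemma prime_prefix_eq (S : Finset (ℤ × ℤ)) {p q : List (ℤ × ℤ)}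
    (hp : IsPrimeIn (M S) p) (hq : IsPrimeIn (M S) q) (h : p <+: q) : p = q := by
  rw [prime_iff] at hp hq
  have hle : p.length ≤ q.length := h.length_le
  rcases lt_or_eq_of_le hle with hlt | heq
  · exfalso
    have htake : q.take p.length = p := (List.prefix_iff_eq_take.mp h).symm
    have hpos : 0 < p.length := List.length_pos_iff.mpr hp.2.2.1
    exact hq.2.2.2 p.length hpos hlt (by rw [htake]; exact hp.2.1)
  · exact List.IsPrefix.eq_of_length h heq

lemma unique_fact (S : Finset (ℤ × ℤ)) : ∀ L₁ L₂ : List (List (ℤ × ℤ)),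
    (∀ q ∈ L₁, IsPrimeIn (M S) q) → (∀ q ∈ L₂, IsPrimeIn (M S) q) →
    L₁.flatten = L₂.flatten → L₁ = L₂ := by
  intro L₁
  induction L₁ with
  | nil =>
      intro L₂ _ h2 hf
      cases L₂ with
      | nil => rfl
      | cons q T =>
          exfalso
          have hq := (h2 q (by simp)).2.1
          have : q ++ T.flatten = [] := by simpa using hf.symm
          exact hq (List.append_eq_nil_iff.mp this).1
  | cons q₁ T₁ ih =>
      intro L₂ h1 h2 hf
      cases L₂ with
      | nil =>
          exfalso
          have hq := (h1 q₁ (by simp)).2.1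
          have : q₁ ++ T₁.flatten = [] := by simpa using hf
          exact hq (List.append_eq_nil_iff.mp this).1
      | cons q₂ T₂ =>
          have hq1 := h1 q₁ (by simp)
          have hq2 := h2 q₂ (by simp)
          have hf' : q₁ ++ T₁.flatten = q₂ ++ T₂.flatten := by simpa using hf
          have heq : q₁ = q₂ := by
            rcases le_total q₁.length q₂.length with h | h
            · exact prime_prefix_eq S hq1 hq2
                (List.prefix_of_prefix_length_le ⟨T₁.flatten, hf'⟩ ⟨T₂.flatten, rfl⟩ h)
            · exact (prime_prefix_eq S hq2 hq1
                (List.prefix_of_prefix_length_le ⟨T₂.flatten, hf'.symm⟩ ⟨T₁.flatten, rfl⟩ h)).symm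
          subst heq
          have hT : T₁.flatten = T₂.flatten := List.append_cancel_left hf'
          rw [ih T₂ (fun q hq => h1 q (by simp [hq])) (fun q hq => h2 q (by simp [hq])) hT]

end PathsFreeAux

/-- **The monoid of paths ending on the `x`-axis is free.**
For a finite step set `𝔖 ⊆ ℤ²`, the set of lattice paths starting at `(0,0)`
with steps in `𝔖` that end on the `x`-axis is a free monoid, whose primes are
exactly the paths touching the `x`-axis only at the starting point and the
ending point. -/
theorem paths_ending_on_x_axis_free_monoid (S : Finset (ℤ × ℤ)) :
    IsFreeSubmonoid {l : List (ℤ × ℤ) | (∀ s ∈ l, s ∈ S) ∧ (l.map Prod.snd).sum = 0} ∧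
    ∀ p : List (ℤ × ℤ),
      IsPrimeIn {l : List (ℤ × ℤ) | (∀ s ∈ l, s ∈ S) ∧ (l.map Prod.snd).sum = 0} p ↔
        ((∀ s ∈ p, s ∈ S) ∧ (p.map Prod.snd).sum = 0 ∧ p ≠ [] ∧
          ∀ i : ℕ, 0 < i → i < p.length → ((p.take i).map Prod.snd).sum ≠ 0) := by
  constructor
  · refine ⟨⟨by simp, by simp⟩, ?_, ?_⟩
    · rintro a ⟨haS, hasum⟩ b ⟨hbS, hbsum⟩
      refine ⟨?_, ?_⟩
      · intro s hs
        rcases List.mem_append.mp hs with h | h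
        · exact haS s h
        · exact hbS s h
      · simp [hasum, hbsum]
    · intro x hx
      obtain ⟨L, hL, hflat⟩ := PathsFreeAux.exists_fact S x.length x le_rfl hx
      refine ⟨L, ⟨hL, hflat⟩, ?_⟩
      rintro L' ⟨hL', hflat'⟩
      exact PathsFreeAux.unique_fact S L' L hL' hL (by rw [hflat, hflat'])
  · exact PathsFreeAux.prime_iff S
end

section
/- Let 𝔖 = {(1,0), (-1,0), (0,2), (0,-1)} and set b = x + x⁻¹. Let Y(t) be the unique formal power series in t with zero constant term satisfying Y(t) = t(Y(t)³ + b·Y(t) + 1), with coefficients in ℂ[x, x⁻¹]. Then the generating function for bilateral walks (paths with steps in 𝔖 ending on the x-axis, weighted by x^(ending abscissa) t^(length)) is S_x(x;t) = 1/(1 - tb - 3tY(t)²). -/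
open PowerSeries

noncomputable section

/-- The step set `𝔖 = {(1,0), (-1,0), (0,2), (0,-1)}`. -/
def stepSet : Finset (ℤ × ℤ) := {(1, 0), (-1, 0), (0, 2), (0, -1)}

/-- The generating function `S_x(x;t)` of bilateral walks: paths with steps in
`𝔖` ending on the `x`-axis, a walk of length `n` ending at `(i,0)` being
weighted `x^i t^n`.  Coefficients lie in `ℂ[x,x⁻¹]` (Laurent polynomials). -/
def Sx : PowerSeries (LaurentPolynomial ℂ) :=
  PowerSeries.mk fun n =>
    ∑ w : Fin n → {s // s ∈ stepSet},
      if (∑ i, (w i : ℤ × ℤ).2) = 0 then LaurentPolynomial.T (∑ i, (w i : ℤ × ℤ).1) else 0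

/-!
Counting walks by their endpoint gives `S_x = CT_y 1/K(y)` with the kernel
`K(y) = 1 - t(b + y² + y⁻¹)`. Since `Y(1 - tb - tY²) = t`, the kernel factors as
`K(y) = (1 - Y/y) · G(y)` with `G(y) = 1 - t(b + Y² + Yy + y²)`, and
`1 - tb - 3tY² = G(y) + t(2Yy + y²)(1 - Y/y)`. Hence
`(1 - tb - 3tY²)/K(y) = 1/(1 - Y/y) + t(2Yy + y²)/G(y)`. The first summand is a power series in `t`
whose coefficients are polynomials in `y⁻¹` with constant term `1`, the second one has coefficients
that are polynomials in `y` divisible by `y`; so their constant term in `y` is `1`.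
-/

theorem PowerSeries.mk_pow_mul_one_sub_X_mul_C {A : Type*} [CommRing A] (a : A) :
    mk (a ^ ·) * (1 - X * C a) = 1 := by
  have := congrArg (rescale a) (mk_one_mul_one_sub_eq_one (S := A))
  simpa [rescale_mk, rescale_X, mul_comm] using this

theorem kernel_partial_fractions {A : Type*} [CommRing A] {t b Y y y' F W V : A}
    (hyy : y * y' = 1) (hY : Y * (1 - t * b - t * Y ^ 2) = t)
    (hF : F * (1 - t * (b + y ^ 2 + y')) = 1) (hW : (1 - Y * y') * W = 1)
    (hV : (1 - t * (b + Y ^ 2 + Y * y + y ^ 2)) * V = 1) :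
    (1 - t * b - 3 * t * Y ^ 2) * F = W + t * y * (2 * Y + y) * V := by
  have hK : 1 - t * (b + y ^ 2 + y') = (1 - Y * y') * (1 - t * (b + Y ^ 2 + Y * y + y ^ 2)) := by
    linear_combination y' * hY - (t * Y ^ 2 + t * Y * y) * hyy
  have hFWV : F = W * V := by
    linear_combination (-F * (1 - t * (b + Y ^ 2 + Y * y + y ^ 2)) * V) * hW - F * hV
      - W * V * F * hK + W * V * hF
  linear_combination (1 - t * b - 3 * t * Y ^ 2) * hFWV + W * hV
      + t * y * (2 * Y + y) * V * hW + (2 * t * Y ^ 2 + t * Y * y) * W * V * hyy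

namespace LaurentPolynomial

open scoped LaurentPolynomial

variable {R : Type*}

section CommSemiring

variable [CommSemiring R]

-- In `R[T;T⁻¹][T;T⁻¹]` the outer variable is `y` and the inner one is `x`.
theorem sum_walks_eq_coeff_zero_pow (S : Finset (ℤ × ℤ)) (n : ℕ) :
    (∑ w : Fin n → S, if ∑ i, (w i : ℤ × ℤ).2 = 0 then T (∑ i, (w i : ℤ × ℤ).1) else 0 :
      R[T;T⁻¹]) = ((∑ s ∈ S, C (T s.1) * T s.2 : R[T;T⁻¹][T;T⁻¹]) ^ n).coeff 0 := by
  rw [← Finset.sum_coe_sort S, Fintype.sum_pow, AddMonoidAlgebra.coeff_sum,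
    Finsupp.finsetSum_apply]
  refine Finset.sum_congr rfl fun w _ => ?_
  have hT (m : ℤ) : (T m : R[T;T⁻¹]) = AddMonoidAlgebra.single m 1 := rfl
  simp_rw [← single_eq_C_mul_T, AddMonoidAlgebra.prod_single, hT, AddMonoidAlgebra.prod_single,
    Finset.prod_const_one]
  rw [AddMonoidAlgebra.coeff_single, Finsupp.single_apply]


/-- The paper's `CT_y`, taken coefficientwise in `t`. -/
def ctY (u : PowerSeries R[T;T⁻¹]) : PowerSeries R :=
  mk fun n => (coeff n u).coeff 0

theorem ctY_add (u v : PowerSeries R[T;T⁻¹]) : ctY (u + v) = ctY u + ctY v := by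
  ext n
  simp [ctY]

theorem ctY_map_C_mul (s : PowerSeries R) (u : PowerSeries R[T;T⁻¹]) :
    ctY (map C s * u) = s * ctY u := by
  ext n
  simp only [ctY, coeff_mk, coeff_mul, coeff_map, AddMonoidAlgebra.coeff_sum,
    Finsupp.finsetSum_apply]
  refine Finset.sum_congr rfl fun p _ => ?_
  rw [← single_eq_C, AddMonoidAlgebra.coeff_single_zero_mul]

theorem coeff_zero_toLaurent (p : Polynomial R) : (Polynomial.toLaurent p).coeff 0 = p.coeff 0 :=
  Finsupp.mapDomain_apply Nat.castEmbedding.injective p.toFinsupp.coeff 0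

theorem ctY_map_toLaurent (u : PowerSeries (Polynomial R)) :
    ctY (map Polynomial.toLaurent u) = map Polynomial.constantCoeff u := by
  ext n
  rw [ctY, coeff_mk, coeff_map, coeff_map, coeff_zero_toLaurent, Polynomial.constantCoeff_apply]

theorem ctY_map_invert (u : PowerSeries R[T;T⁻¹]) :
    ctY (map (↑(invert (R := R)) : R[T;T⁻¹] →+* R[T;T⁻¹]) u) = ctY u := by
  ext n
  simp [ctY]

end CommSemiring

variable [CommRing R]

theorem exists_mul_eq_one_and_ctY_eq_one (Y : PowerSeries R) (hY0 : constantCoeff Y = 0) :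
    ∃ W, (1 - map C Y * PowerSeries.C (T (-1))) * W = 1 ∧ ctY W = 1 := by
  set Z := 1 - map Polynomial.C Y * PowerSeries.C Polynomial.X
  have hY0' : constantCoeff (map Polynomial.C Y) = 0 := by
    rw [← coeff_zero_eq_constantCoeff_apply, coeff_map, coeff_zero_eq_constantCoeff_apply, hY0,
      map_zero]
  have hZ : constantCoeff Z = ((1 : (Polynomial R)ˣ) : Polynomial R) := by simp [Z, hY0']
  -- `φ` substitutes `y⁻¹` for the polynomial variable
  set φ := (map (↑(invert (R := R)) : R[T;T⁻¹] →+* R[T;T⁻¹])).comp (map Polynomial.toLaurent)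
  have hφZ : φ Z = 1 - map C Y * PowerSeries.C (T (-1)) := by
    have hY : φ (map Polynomial.C Y) = map C Y := by ext n; simp [φ, coeff_map]
    simp [Z, ← hY, φ]
  refine ⟨φ (invOfUnit Z 1), by rw [← hφZ, ← map_mul, mul_invOfUnit _ _ hZ, map_one], ?_⟩
  have hZW : map Polynomial.constantCoeff (invOfUnit Z 1) = 1 := by
    simpa [Z] using congrArg (map Polynomial.constantCoeff) (mul_invOfUnit _ _ hZ)
  rw [RingHom.comp_apply, ctY_map_invert, ctY_map_toLaurent, hZW]

theorem exists_mul_eq_one_and_ctY_mul_eq_zero (b : R) (Y : PowerSeries R) :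
    ∃ V, (1 - X * (PowerSeries.C (C b) + map C Y ^ 2 + map C Y * PowerSeries.C (T 1) +
      PowerSeries.C (T 1) ^ 2)) * V = 1 ∧
      ctY (X * PowerSeries.C (T 1) * (2 * map C Y + PowerSeries.C (T 1)) * V) = 0 := by
  set y : PowerSeries (Polynomial R) := PowerSeries.C Polynomial.X
  set Yp := map Polynomial.C Y
  set G := 1 - X * (PowerSeries.C (Polynomial.C b) + Yp ^ 2 + Yp * y + y ^ 2)
  have hG : constantCoeff G = ((1 : (Polynomial R)ˣ) : Polynomial R) := by simp [G]
  -- `toL` substitutes `y` for the polynomial variable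
  set toL := map (Polynomial.toLaurent (R := R))
  have hYp : toL Yp = map C Y := by ext n; simp [Yp, toL, coeff_map]
  have htoLG : toL G = 1 - X * (PowerSeries.C (C b) + map C Y ^ 2 +
      map C Y * PowerSeries.C (T 1) + PowerSeries.C (T 1) ^ 2) := by
    simp [G, y, hYp, toL]
  have htoLD : toL (X * y * (2 * Yp + y)) =
      X * PowerSeries.C (T 1) * (2 * map C Y + PowerSeries.C (T 1)) := by
    simp [y, hYp, toL, map_ofNat]
  refine ⟨toL (invOfUnit G 1), ?_, ?_⟩
  · rw [← htoLG, ← map_mul, mul_invOfUnit _ _ hG, map_one]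
  · rw [← htoLD, ← map_mul, ctY_map_toLaurent]
    simp [y]

theorem ctY_mk_pow_mul_eq_one (b : R) (Y : PowerSeries R) (hY0 : constantCoeff Y = 0)
    (hY : Y = X * (Y ^ 3 + PowerSeries.C b * Y + 1)) :
    ctY (mk ((C b + T 2 + T (-1) : R[T;T⁻¹]) ^ ·)) * (1 - X * PowerSeries.C b - 3 * X * Y ^ 2)
      = 1 := by
  obtain ⟨W, hW, hctW⟩ := exists_mul_eq_one_and_ctY_eq_one Y hY0
  obtain ⟨V, hV, hctV⟩ := exists_mul_eq_one_and_ctY_mul_eq_zero b Y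
  have hyy : PowerSeries.C (T 1) * PowerSeries.C (T (-1)) = (1 : PowerSeries R[T;T⁻¹]) := by
    rw [← map_mul, ← T_add, add_neg_cancel, T_zero, map_one]
  have hcubic : map C Y * (1 - X * PowerSeries.C (C b) - X * map C Y ^ 2) = X := by
    have := congrArg (map C) hY
    simp only [map_mul, map_add, map_pow, map_one, map_X, map_C] at this
    linear_combination this
  have hF : mk ((C b + T 2 + T (-1) : R[T;T⁻¹]) ^ ·) * (1 - X * (PowerSeries.C (C b) +
      PowerSeries.C (T 1) ^ 2 + PowerSeries.C (T (-1)))) = 1 := by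
    rw [← map_pow, T_pow, ← map_add, ← map_add]
    exact mk_pow_mul_one_sub_X_mul_C _
  have hB : map C (1 - X * PowerSeries.C b - 3 * X * Y ^ 2)
      = 1 - X * PowerSeries.C (C b) - 3 * X * map C Y ^ 2 := by
    simp [map_ofNat]
  rw [mul_comm, ← ctY_map_C_mul, hB, kernel_partial_fractions hyy hcubic hF hW hV, ctY_add, hctW,
    hctV, add_zero]

end LaurentPolynomial

open LaurentPolynomial

theorem Sx_eq_ctY :
    Sx = ctY (mk ((LaurentPolynomial.C (T 1 + T (-1)) + T 2 + T (-1) :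
      (LaurentPolynomial ℂ)[T;T⁻¹]) ^ ·)) := by
  ext n : 1
  have hstep : (∑ s ∈ stepSet, LaurentPolynomial.C (T s.1) * T s.2 : (LaurentPolynomial ℂ)[T;T⁻¹])
      = LaurentPolynomial.C (T 1 + T (-1)) + T 2 + T (-1) := by
    rw [stepSet, Finset.sum_insert (by decide), Finset.sum_insert (by decide),
      Finset.sum_insert (by decide), Finset.sum_singleton]
    simp only [T_zero, map_one, map_add, mul_one, one_mul]
    ring
  simp only [Sx, ctY, coeff_mk]
  rw [← hstep, ← sum_walks_eq_coeff_zero_pow]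

/-- **Bilateral walks for `𝔖 = {(1,0),(-1,0),(0,2),(0,-1)}`.**
Let `b = x + x⁻¹` and let `Y(t)` be the unique power series with zero constant
term (coefficients in `ℂ[x,x⁻¹]`) satisfying `Y = t(Y³ + bY + 1)`.  Then
`S_x(x;t) = 1/(1 - tb - 3tY(t)²)`. -/
theorem bilateral_walks_gf (Y : PowerSeries (LaurentPolynomial ℂ))
    (hY0 : PowerSeries.constantCoeff (R := LaurentPolynomial ℂ) Y = 0)
    (hY : Y = PowerSeries.X *
      (Y ^ 3 + PowerSeries.C (R := LaurentPolynomial ℂ)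
        (LaurentPolynomial.T 1 + LaurentPolynomial.T (-1)) * Y + 1)) :
    Sx * (1 - PowerSeries.X * PowerSeries.C (R := LaurentPolynomial ℂ)
        (LaurentPolynomial.T 1 + LaurentPolynomial.T (-1)) -
      3 * PowerSeries.X * Y ^ 2) = 1 := by
  rw [Sx_eq_ctY]
  exact ctY_mk_pow_mul_eq_one _ Y hY0 hY
end
end

section
/- Let b be an indeterminate, Y(t) the unique power series with Y(0)=0 satisfying Y = t(Y³ + bY + 1), and S(t) = 1/(1 - tb - 3tY(t)²). Then d/dt log S(t) = ((4b³ + 27)t² - 8tb² + 4b)/(4(1-bt)³ - 27t³) + 9tY(t)/(4(1-bt)³ - 27t³), as an identity of formal power series in t over ℚ(b). -/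
/-!
Implicit differentiation of `Y = t (Y³ + bY + 1)` gives `Y' D = Y³ + bY + 1`, where
`D = 1 - tb - 3tY² = 1/S`. Hence `(log S)' = -D'/D`, and after clearing `D` the claim becomes
a polynomial identity in `t, b, Y` that holds modulo the cubic relation satisfied by `Y`.
-/

open PowerSeries

theorem sq_mul_eq_of_cubic_relation {A : Type*} [CommRing A] {t b y : A}
    (hy : y = t * (y ^ 3 + b * y + 1)) :
    (1 - t * b - 3 * t * y ^ 2) ^ 2 *
        ((4 * b ^ 3 + 27) * t ^ 2 - 8 * b ^ 2 * t + 4 * b + 9 * t * y) =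
      (4 * (1 - b * t) ^ 3 - 27 * t ^ 3) *
        ((b + 3 * y ^ 2) * (1 - t * b - 3 * t * y ^ 2) + 6 * t * y * (y ^ 3 + b * y + 1)) := by
  linear_combination -(12 * y + 27 * t + 81 * t ^ 2 * y ^ 2 - 27 * t ^ 2 * b
    - 36 * t ^ 2 * b ^ 2 * y + 162 * t ^ 3 * y + 24 * t ^ 3 * b ^ 3 * y) * hy

namespace PowerSeries

variable {R : Type*} [CommRing R] {b : R} {Y : R⟦X⟧}

theorem derivative_mul_of_eq_X_mul_cubic (hY : Y = X * (Y ^ 3 + C b * Y + 1)) :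
    d⁄dX R Y * (1 - X * C b - 3 * X * Y ^ 2) = Y ^ 3 + C b * Y + 1 := by
  have h := congrArg (d⁄dX R) hY
  simp only [Derivation.leibniz, Derivation.leibniz_pow, map_add,
    Derivation.map_one_eq_zero, derivative_X, derivative_C, smul_eq_mul,
    nsmul_eq_mul, Nat.cast_ofNat] at h
  linear_combination h

theorem mul_derivative_of_eq_X_mul_cubic (hY : Y = X * (Y ^ 3 + C b * Y + 1)) :
    (1 - X * C b - 3 * X * Y ^ 2) * d⁄dX R (1 - X * C b - 3 * X * Y ^ 2) =
      -(C b + 3 * Y ^ 2) * (1 - X * C b - 3 * X * Y ^ 2) - 6 * X * Y * (Y ^ 3 + C b * Y + 1) := by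
  rw [← Nat.cast_ofNat (R := R⟦X⟧) (n := 3)]
  simp only [Derivation.leibniz, Derivation.leibniz_pow, map_sub, Derivation.map_natCast,
    Derivation.map_one_eq_zero, derivative_X, derivative_C, smul_eq_mul, nsmul_eq_mul]
  linear_combination (-6 * X * Y) * derivative_mul_of_eq_X_mul_cubic hY

/-- `4 (1 - bt)³ - 27 t³` is `t⁻¹` times the discriminant in `Y` of `t Y³ + (bt - 1) Y + t`. -/
theorem derivative_mul_discriminant_eq (hY : Y = X * (Y ^ 3 + C b * Y + 1)) {S : R⟦X⟧}
    (hS : S * (1 - X * C b - 3 * X * Y ^ 2) = 1) :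
    d⁄dX R S * (4 * (1 - C b * X) ^ 3 - 27 * X ^ 3) =
      S * ((4 * C b ^ 3 + 27) * X ^ 2 - 8 * C b ^ 2 * X + 4 * C b + 9 * X * Y) := by
  set D := 1 - X * C b - 3 * X * Y ^ 2
  set Q := (4 * C b ^ 3 + 27) * X ^ 2 - 8 * C b ^ 2 * X + 4 * C b + 9 * X * Y
  have hSD : d⁄dX R S = -S ^ 2 * d⁄dX R D := by
    rw [(d⁄dX R).leibniz_of_mul_eq_one hS, smul_eq_mul, neg_mul]
  have hDQ : D ^ 2 * Q = -(4 * (1 - C b * X) ^ 3 - 27 * X ^ 3) * (D * d⁄dX R D) := by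
    rw [mul_derivative_of_eq_X_mul_cubic hY]
    linear_combination sq_mul_eq_of_cubic_relation hY
  linear_combination (4 * (1 - C b * X) ^ 3 - 27 * X ^ 3) * hSD - S ^ 3 * hDQ
    + (S * Q * (S * D + 1) + S ^ 2 * (4 * (1 - C b * X) ^ 3 - 27 * X ^ 3) * d⁄dX R D) * hS

end PowerSeries

theorem log_derivative_Sx_general
    (Y S : PowerSeries (RatFunc ℚ))
    (hY : Y = PowerSeries.X *
      (Y ^ 3 + PowerSeries.C (R := RatFunc ℚ) RatFunc.X * Y + 1))
    (hS : S * (1 - PowerSeries.X * PowerSeries.C (R := RatFunc ℚ) RatFunc.X -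
      3 * PowerSeries.X * Y ^ 2) = 1) :
    PowerSeries.derivativeFun S *
        (4 * (1 - PowerSeries.C (R := RatFunc ℚ) RatFunc.X * PowerSeries.X) ^ 3 -
          27 * PowerSeries.X ^ 3) =
      S * (PowerSeries.C (R := RatFunc ℚ) (4 * RatFunc.X ^ 3 + 27) * PowerSeries.X ^ 2 -
            PowerSeries.C (R := RatFunc ℚ) (8 * RatFunc.X ^ 2) * PowerSeries.X +
            PowerSeries.C (R := RatFunc ℚ) (4 * RatFunc.X) +
            9 * PowerSeries.X * Y) := by
  simp only [map_add, map_mul, map_pow, map_ofNat]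
  exact derivative_mul_discriminant_eq hY hS

/-- **Equation (7): the logarithmic derivative of `S_x(x;t)`.**
Work in `ℚ(b)[[t]]`.  Let `Y(t)` be the unique power series with `Y(0) = 0`
satisfying `Y = t(Y³ + bY + 1)`, and let `S(t) = 1/(1 - tb - 3tY(t)²)`.  Then
`d/dt log S = ((4b³+27)t² - 8tb² + 4b)/(4(1-bt)³ - 27t³)
  + 9tY(t)/(4(1-bt)³ - 27t³)`,
stated in the cross-multiplied form
`S'·(4(1-bt)³ - 27t³) = S·((4b³+27)t² - 8tb² + 4b + 9tY)`,
which is equivalent since `d/dt log S = S'/S` and both denominators are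
units. -/
theorem log_derivative_Sx
    (Y S : PowerSeries (RatFunc ℚ))
    (hY0 : PowerSeries.constantCoeff (R := RatFunc ℚ) Y = 0)
    (hY : Y = PowerSeries.X *
      (Y ^ 3 + PowerSeries.C (R := RatFunc ℚ) RatFunc.X * Y + 1))
    (hS : S * (1 - PowerSeries.X * PowerSeries.C (R := RatFunc ℚ) RatFunc.X -
      3 * PowerSeries.X * Y ^ 2) = 1) :
    PowerSeries.derivativeFun S *
        (4 * (1 - PowerSeries.C (R := RatFunc ℚ) RatFunc.X * PowerSeries.X) ^ 3 -
          27 * PowerSeries.X ^ 3) =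
      S * (PowerSeries.C (R := RatFunc ℚ) (4 * RatFunc.X ^ 3 + 27) * PowerSeries.X ^ 2 -
            PowerSeries.C (R := RatFunc ℚ) (8 * RatFunc.X ^ 2) * PowerSeries.X +
            PowerSeries.C (R := RatFunc ℚ) (4 * RatFunc.X) +
            9 * PowerSeries.X * Y) :=
  log_derivative_Sx_general Y S hY hS
end

section
/- Let 𝔖 be a finite step set in ℤ² and let p be the smallest positive integer such that some 𝔖-path from (0,0) ends at (p,0). Then the number of walks of length n on the half plane avoiding the half line (paths with steps in 𝔖 starting at (0,0), never visiting any point with negative y-coordinate, never visiting any point (-k,0) with k ≥ 0 after the start) that end at (p,0) equals (1/n) times the number of all 𝔖-paths of length n from (0,0) ending at (p,0). -/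
/-- The number of `𝔖`-paths of length `n` from `(0,0)` ending at `(p,0)`. -/
noncomputable def pathCount (S : Finset (ℤ × ℤ)) (p : ℤ) (n : ℕ) : ℕ :=
  Nat.card {l : List (ℤ × ℤ) // l.length = n ∧ (∀ s ∈ l, s ∈ S) ∧
    (l.map Prod.fst).sum = p ∧ (l.map Prod.snd).sum = 0}

/-- The number of walks of length `n` on the half plane avoiding the half line
that end at `(p,0)`: paths with steps in `𝔖` starting at `(0,0)` that never
visit a point with negative `y`-coordinate and never visit a point `(-k,0)`,
`k ≥ 0`, after the start. -/
noncomputable def halfPlaneSlitCount (S : Finset (ℤ × ℤ)) (p : ℤ) (n : ℕ) : ℕ :=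
  Nat.card {l : List (ℤ × ℤ) // l.length = n ∧ (∀ s ∈ l, s ∈ S) ∧
    (l.map Prod.fst).sum = p ∧ (l.map Prod.snd).sum = 0 ∧
    (∀ i : ℕ, 0 ≤ ((l.take i).map Prod.snd).sum) ∧
    ∀ i : ℕ, 0 < i → i ≤ l.length →
      ¬(((l.take i).map Prod.snd).sum = 0 ∧ ((l.take i).map Prod.fst).sum ≤ 0)}

/-!
Compare points of `ℤ²` lexicographically, height first and abscissa second. A path stays in the
upper half plane and avoids the half line `{(-k, 0)}` exactly when every nonempty prefix of its
steps has positive sum in this order. A path ending at `(p, 0)` has positive total, so by the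
cycle lemma its rotation starting at the last minimum of its partial sums is such a walk. If two
rotations were, the steps between their starting points would form a path from `(0, 0)` to some
`(q, 0)` with `0 < q < p`, against the minimality of `p`. So the paths of length `n` ending at
`(p, 0)` are exactly the `n` distinct rotations of these walks.
-/

lemma List.sum_take_add_sum_take_rotate {M : Type*} [AddCommMonoid M] (l : List M) {a i : ℕ}
    (ha : a ≤ l.length) (hi : i ≤ l.length) :
    (l.take a).sum + ((l.rotate a).take i).sum = ((l ++ l).take (a + i)).sum := by
  rw [List.take_add, List.take_append_of_le_length ha, List.sum_append,
    List.drop_append_of_le_length ha, List.rotate_eq_drop_append_take ha, List.take_append,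
    List.take_append, List.take_take, List.length_drop, min_eq_left (by omega)]

lemma List.sum_take_rotate_eq_sub {G : Type*} [AddCommGroup G] {l : List G} {a i : ℕ}
    (ha : a ≤ l.length) (hi : i ≤ l.length) :
    ((l.rotate a).take i).sum = ((l ++ l).take (a + i)).sum - ((l ++ l).take a).sum := by
  rw [← l.sum_take_add_sum_take_rotate ha hi, List.take_append_of_le_length ha,
    add_sub_cancel_left]

lemma List.sum_take_length_add_append {M : Type*} [AddMonoid M] (l : List M) {k : ℕ}
    (hk : k ≤ l.length) : ((l ++ l).take (l.length + k)).sum = l.sum + ((l ++ l).take k).sum := by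
  rw [List.take_length_add_append, List.sum_append, List.take_append_of_le_length hk]

lemma List.sum_drop_take_eq_sub {G : Type*} [AddCommGroup G] (l : List G) {a b : ℕ}
    (hab : a ≤ b) : ((l.take b).drop a).sum = (l.take b).sum - (l.take a).sum := by
  conv_rhs => rw [← List.take_append_drop a (l.take b)]
  rw [List.take_take, min_eq_left hab, List.sum_append, add_sub_cancel_left]

section CycleLemma

variable {G : Type*} [AddCommGroup G] [LinearOrder G] [IsOrderedAddMonoid G]

def PrefixSumsPos (l : List G) : Prop :=
  ∀ i, 0 < i → i ≤ l.length → 0 < (l.take i).sum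

theorem exists_rotate_prefixSumsPos {l : List G} (hl : 0 < l.sum) :
    ∃ a < l.length, PrefixSumsPos (l.rotate a) := by
  classical
  set n := l.length
  have hn : 0 < n := List.length_pos_iff.mpr (by rintro rfl; simp at hl)
  set pos : ℕ → G := fun k => ((l ++ l).take k).sum
  obtain ⟨a₀, ha₀, ha₀_min⟩ := (Finset.range n).exists_min_image pos ⟨0, by simpa⟩
  rw [Finset.mem_range] at ha₀
  set a := Nat.findGreatest (fun a => ∀ k < n, pos a ≤ pos k) (n - 1)
  have ha_min : ∀ k < n, pos a ≤ pos k :=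
    Nat.findGreatest_spec (P := fun a => ∀ k < n, pos a ≤ pos k) (m := a₀) (by omega)
      (fun k hk => ha₀_min k (Finset.mem_range.mpr hk))
  have ha_last : ∀ k, a < k → k < n → pos a < pos k := fun k hak hkn =>
    (ha_min k hkn).lt_of_ne fun h =>
      Nat.findGreatest_is_greatest hak (by omega) (h ▸ ha_min)
  have ha : a < n := by
    have := Nat.findGreatest_le (P := fun a => ∀ k < n, pos a ≤ pos k) (n - 1)
    omega
  refine ⟨a, ha, fun i hi₀ hin => ?_⟩
  rw [List.length_rotate] at hin
  rw [List.sum_take_rotate_eq_sub ha.le hin, sub_pos]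
  rcases lt_or_ge (a + i) n with h | h
  · exact ha_last _ (by omega) h
  · obtain ⟨k, hk⟩ : ∃ k, a + i = n + k := ⟨a + i - n, by omega⟩
    calc pos a ≤ pos k := ha_min k (by omega)
      _ < l.sum + pos k := lt_add_of_pos_left _ hl
      _ = pos (a + i) := by rw [hk]; exact (l.sum_take_length_add_append (by omega)).symm

lemma sum_drop_take_pos_lt_of_prefixSumsPos {l : List G} {a b : ℕ} (hab : a < b)
    (hb : b < l.length) (ha' : PrefixSumsPos (l.rotate a)) (hb' : PrefixSumsPos (l.rotate b)) :
    0 < ((l.take b).drop a).sum ∧ ((l.take b).drop a).sum < l.sum := by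
  have h₁ := ha' (b - a) (by omega) (by simp; omega)
  have h₂ := hb' (l.length - b + a) (by omega) (by simp; omega)
  rw [List.sum_take_rotate_eq_sub (by omega) (by omega), Nat.add_sub_cancel' hab.le] at h₁
  rw [List.sum_take_rotate_eq_sub hb.le (by omega),
    show b + (l.length - b + a) = l.length + a by omega,
    l.sum_take_length_add_append (by omega)] at h₂
  rw [List.take_append_of_le_length hb.le, List.take_append_of_le_length (by omega)] at h₁ h₂
  rw [l.sum_drop_take_eq_sub hab.le]
  exact ⟨h₁, sub_lt_iff_lt_add.mpr (sub_pos.mp h₂)⟩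

theorem eq_of_prefixSumsPos_rotate {l : List G}
    (hgap : ∀ a b, a < b → b < l.length →
      ¬(0 < ((l.take b).drop a).sum ∧ ((l.take b).drop a).sum < l.sum))
    {a b : ℕ} (ha : a < l.length) (hb : b < l.length)
    (ha' : PrefixSumsPos (l.rotate a)) (hb' : PrefixSumsPos (l.rotate b)) : a = b := by
  rcases lt_trichotomy a b with hab | hab | hab
  · exact (hgap a b hab hb (sum_drop_take_pos_lt_of_prefixSumsPos hab hb ha' hb')).elim
  · exact hab
  · exact (hgap b a hab ha (sum_drop_take_pos_lt_of_prefixSumsPos hab ha hb' ha')).elim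

end CycleLemma

lemma List.rotate_rotate_sub_mod {α : Type*} (l : List α) {i : ℕ} (hi : i ≤ l.length) :
    (l.rotate i).rotate ((l.length - i) % l.length) = l := by
  rw [List.rotate_rotate, ← List.rotate_mod, Nat.add_mod_mod, Nat.add_sub_cancel' hi,
    Nat.mod_self, List.rotate_zero]

lemma Nat.eq_of_sub_mod_eq {n i j : ℕ} (hi : i < n) (hj : j < n)
    (h : (n - i) % n = (n - j) % n) : i = j := by
  have h' := Nat.ModEq.add_right (i + j) h
  rw [show n - i + (i + j) = n + j by omega, show n - j + (i + j) = n + i by omega] at h'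
  exact (Nat.ModEq.add_left_cancel' n h').symm.eq_of_lt_of_lt hi hj

lemma card_mul_eq_card_of_existsUnique_rotate {α : Type*} {n : ℕ} {P Q : List α → Prop}
    (hlen : ∀ l, P l → l.length = n) (hrot : ∀ l, P l → ∀ a, P (l.rotate a))
    (hex : ∀ l, P l → ∃ a < n, Q (l.rotate a))
    (huniq : ∀ l, P l → ∀ a < n, ∀ b < n, Q (l.rotate a) → Q (l.rotate b) → a = b) :
    Nat.card {l // P l ∧ Q l} * n = Nat.card {l // P l} := by
  have rotate_back (l : List α) (hl : P l) {i : ℕ} (hi : i ≤ n) :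
      (l.rotate i).rotate ((n - i) % n) = l := by
    rw [← hlen l hl] at hi ⊢
    exact l.rotate_rotate_sub_mod hi
  let Φ : {l // P l ∧ Q l} × Fin n → {l // P l} := fun x => ⟨x.1.1.rotate x.2, hrot _ x.1.2.1 _⟩
  have hΦ : Function.Bijective Φ := by
    refine ⟨?_, ?_⟩
    · rintro ⟨⟨g₁, hP₁, hQ₁⟩, i₁, hi₁⟩ ⟨⟨g₂, hP₂, hQ₂⟩, i₂, hi₂⟩ h
      obtain ⟨L, hL₁, hL₂⟩ : ∃ L, g₁.rotate i₁ = L ∧ g₂.rotate i₂ = L :=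
        ⟨_, rfl, (congrArg Subtype.val h).symm⟩
      have hPL : P L := hL₁ ▸ hrot g₁ hP₁ i₁
      have hback₁ := rotate_back g₁ hP₁ hi₁.le
      have hback₂ := rotate_back g₂ hP₂ hi₂.le
      rw [hL₁] at hback₁
      rw [hL₂] at hback₂
      have hi : (n - i₁) % n = (n - i₂) % n :=
        huniq L hPL _ (Nat.mod_lt _ (by omega)) _ (Nat.mod_lt _ (by omega))
          (hback₁ ▸ hQ₁) (hback₂ ▸ hQ₂)
      obtain rfl := Nat.eq_of_sub_mod_eq hi₁ hi₂ hi
      obtain rfl : g₁ = g₂ := hback₁.symm.trans hback₂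
      rfl
    · rintro ⟨l, hl⟩
      obtain ⟨a, ha, hQ⟩ := hex l hl
      refine ⟨⟨⟨l.rotate a, hrot l hl a, hQ⟩, (n - a) % n, Nat.mod_lt _ (by omega)⟩, ?_⟩
      exact Subtype.ext (rotate_back l hl ha.le)
  rw [← Nat.card_congr (Equiv.ofBijective Φ hΦ), Nat.card_prod, Nat.card_fin]

def toLexSwap (v : ℤ × ℤ) : Lex (ℤ × ℤ) := toLex v.swap

lemma sum_map_toLexSwap (l : List (ℤ × ℤ)) :
    (l.map toLexSwap).sum = toLex ((l.map Prod.snd).sum, (l.map Prod.fst).sum) := by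
  induction l with
  | nil => rfl
  | cons s l ih => simp only [List.map_cons, List.sum_cons, ih]; rfl

lemma zero_lt_toLex_iff {y x : ℤ} : 0 < toLex (y, x) ↔ 0 < y ∨ y = 0 ∧ 0 < x := by
  rw [show (0 : Lex (ℤ × ℤ)) = toLex (0, 0) from rfl, Prod.Lex.toLex_lt_toLex, eq_comm]

lemma prefixSumsPos_map_toLexSwap_iff {l : List (ℤ × ℤ)} (hY : (l.map Prod.snd).sum = 0) :
    PrefixSumsPos (l.map toLexSwap) ↔ (∀ i : ℕ, 0 ≤ ((l.take i).map Prod.snd).sum) ∧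
      ∀ i : ℕ, 0 < i → i ≤ l.length →
        ¬(((l.take i).map Prod.snd).sum = 0 ∧ ((l.take i).map Prod.fst).sum ≤ 0) := by
  simp only [PrefixSumsPos, List.length_map, ← List.map_take, sum_map_toLexSwap,
    zero_lt_toLex_iff]
  constructor
  · intro h
    refine ⟨fun i => ?_, fun i hi₀ hin => by have := h i hi₀ hin; omega⟩
    rcases Nat.eq_zero_or_pos i with rfl | hi₀
    · simp
    rcases le_or_gt i l.length with hin | hin
    · have := h i hi₀ hin; omega
    · rw [List.take_of_length_le hin.le, hY]
  · rintro ⟨h₁, h₂⟩ i hi₀ hin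
    have := h₁ i
    have := h₂ i hi₀ hin
    omega

def IsPathTo (S : Finset (ℤ × ℤ)) (p : ℤ) (n : ℕ) (l : List (ℤ × ℤ)) : Prop :=
  l.length = n ∧ (∀ s ∈ l, s ∈ S) ∧ (l.map Prod.fst).sum = p ∧ (l.map Prod.snd).sum = 0

lemma IsPathTo.rotate {S : Finset (ℤ × ℤ)} {p : ℤ} {n : ℕ} {l : List (ℤ × ℤ)}
    (hl : IsPathTo S p n l) (a : ℕ) : IsPathTo S p n (l.rotate a) := by
  obtain ⟨hlen, hS, hX, hY⟩ := hl
  refine ⟨by rw [List.length_rotate, hlen], fun s hs => hS s (List.mem_rotate.mp hs), ?_, ?_⟩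
  · rw [List.map_rotate, (List.rotate_perm _ _).sum_eq, hX]
  · rw [List.map_rotate, (List.rotate_perm _ _).sum_eq, hY]

lemma halfPlaneSlitCount_eq_card (S : Finset (ℤ × ℤ)) (p : ℤ) (n : ℕ) :
    halfPlaneSlitCount S p n =
      Nat.card {l // IsPathTo S p n l ∧ PrefixSumsPos (l.map toLexSwap)} :=
  Nat.card_congr <| Equiv.subtypeEquivRight fun l => by
    constructor
    · rintro ⟨hlen, hS, hX, hY, hslit⟩
      exact ⟨⟨hlen, hS, hX, hY⟩, (prefixSumsPos_map_toLexSwap_iff hY).mpr hslit⟩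
    · rintro ⟨⟨hlen, hS, hX, hY⟩, hpos⟩
      exact ⟨hlen, hS, hX, hY, (prefixSumsPos_map_toLexSwap_iff hY).mp hpos⟩

lemma pathCount_ne_zero {S : Finset (ℤ × ℤ)} {l : List (ℤ × ℤ)} (hS : ∀ s ∈ l, s ∈ S)
    (hY : (l.map Prod.snd).sum = 0) : pathCount S (l.map Prod.fst).sum l.length ≠ 0 := by
  refine Nat.card_ne_zero.mpr ⟨⟨⟨l, rfl, hS, rfl, hY⟩⟩, Set.Finite.to_subtype ?_⟩
  refine ((List.finite_length_eq S l.length).image (List.map Subtype.val)).subset ?_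
  rintro w ⟨hlen, hwS, -⟩
  lift w to List S using hwS
  exact ⟨w, by simpa using hlen, rfl⟩

lemma IsPathTo.exists_rotate_prefixSumsPos {S : Finset (ℤ × ℤ)} {p : ℤ} {n : ℕ}
    {l : List (ℤ × ℤ)} (hp : 0 < p) (hl : IsPathTo S p n l) :
    ∃ a < n, PrefixSumsPos ((l.rotate a).map toLexSwap) := by
  obtain ⟨hlen, -, hX, hY⟩ := hl
  obtain ⟨a, ha, h⟩ := _root_.exists_rotate_prefixSumsPos (l := l.map toLexSwap)
    (by rw [sum_map_toLexSwap, hX, hY]; exact zero_lt_toLex_iff.mpr (Or.inr ⟨rfl, hp⟩))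
  exact ⟨a, by simpa [hlen] using ha, by rwa [List.map_rotate]⟩

lemma IsPathTo.eq_of_prefixSumsPos_rotate {S : Finset (ℤ × ℤ)} {p : ℤ} {n : ℕ}
    {l : List (ℤ × ℤ)} (hmin : ∀ q : ℤ, 0 < q → (∃ n : ℕ, pathCount S q n ≠ 0) → p ≤ q)
    (hl : IsPathTo S p n l) {a b : ℕ} (ha : a < n) (hb : b < n)
    (ha' : PrefixSumsPos ((l.rotate a).map toLexSwap))
    (hb' : PrefixSumsPos ((l.rotate b).map toLexSwap)) : a = b := by
  obtain ⟨hlen, hS, hX, hY⟩ := hl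
  rw [List.map_rotate] at ha' hb'
  refine _root_.eq_of_prefixSumsPos_rotate (fun i j _ _ hgap => ?_) (by simpa [hlen])
    (by simpa [hlen]) ha' hb'
  set w := (l.take j).drop i with hw
  rw [← List.map_take, ← List.map_drop, ← hw, sum_map_toLexSwap, sum_map_toLexSwap, hX, hY,
    zero_lt_toLex_iff, Prod.Lex.toLex_lt_toLex] at hgap
  have hwY : (w.map Prod.snd).sum = 0 := by omega
  have hwS : ∀ s ∈ w, s ∈ S := fun s hs =>
    hS s (((List.drop_sublist _ _).trans (List.take_sublist _ _)).subset hs)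
  have := hmin _ (by omega) ⟨w.length, pathCount_ne_zero hwS hwY⟩
  omega

theorem half_plane_half_line_walks_general (S : Finset (ℤ × ℤ)) (p : ℤ)
    (hp : 0 < p)
    (hmin : ∀ q : ℤ, 0 < q → (∃ n : ℕ, pathCount S q n ≠ 0) → p ≤ q) :
    ∀ n : ℕ, halfPlaneSlitCount S p n * n = pathCount S p n := by
  intro n
  rw [halfPlaneSlitCount_eq_card]
  exact card_mul_eq_card_of_existsUnique_rotate (fun _ hl => hl.1) (fun _ hl a => hl.rotate a)
    (fun _ hl => hl.exists_rotate_prefixSumsPos hp)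
    (fun _ hl _ ha _ hb => hl.eq_of_prefixSumsPos_rotate hmin ha hb)

/-- **Theorem 4.4 (walks on the half plane avoiding a half line).**
Let `𝔖` be a finite step set and `p` the smallest positive integer such that
some `𝔖`-path from `(0,0)` ends at `(p,0)`.  Then the number of walks of
length `n` on the half plane avoiding the half line ending at `(p,0)` equals
`1/n` times the number of all `𝔖`-paths of length `n` ending at `(p,0)`. -/
theorem half_plane_half_line_walks (S : Finset (ℤ × ℤ)) (p : ℤ)
    (hp : 0 < p)
    (hex : ∃ n : ℕ, pathCount S p n ≠ 0)
    (hmin : ∀ q : ℤ, 0 < q → (∃ n : ℕ, pathCount S q n ≠ 0) → p ≤ q) :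
    ∀ n : ℕ, halfPlaneSlitCount S p n * n = pathCount S p n :=
  half_plane_half_line_walks_general S p hp hmin
end

section
/- Let 𝔖 be a finite step set. Let S₀(x,t) be the generating function of walks on the slit plane ending on the x-axis (weighted by x^(ending abscissa) t^(length)), let B(x⁻¹,t) be the generating function of paths that start at (0,0) and visit the set {(-k,0) : k ≥ 0} only at their endpoint (after the start), and let S_x(x;t) = CT_y 1/(1 - Γ(𝔖)) be the generating function of bilateral walks (paths ending on the x-axis). Then S₀(x,t) · 1/(1 - B(x⁻¹,t)) = S_x(x;t). -/
noncomputable section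

/-- The generating function of a set `P` of lattice paths (lists of steps in
`ℤ²`), a path of length `n` ending at `(i,j)` being weighted `x^i t^n`;
coefficients are Laurent polynomials in `x`. -/
def walksGF (P : Set (List (ℤ × ℤ))) : PowerSeries (LaurentPolynomial ℂ) :=
  PowerSeries.mk fun n =>
    ∑ᶠ l ∈ {l : List (ℤ × ℤ) | l ∈ P ∧ l.length = n},
      LaurentPolynomial.T (l.map Prod.fst).sum

/-- Bilateral walks: paths with steps in `S` whose total `y`-displacement is `0`. -/
def bilateralSet (S : Finset (ℤ × ℤ)) : Set (List (ℤ × ℤ)) :=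
  {l | (∀ s ∈ l, s ∈ S) ∧ (l.map Prod.snd).sum = 0}

/-- Walks on the slit plane ending on the `x`-axis: paths with steps in `S`,
ending on the `x`-axis, never visiting a point `(-k,0)`, `k ≥ 0`, after the
starting point. -/
def slitAxisSet (S : Finset (ℤ × ℤ)) : Set (List (ℤ × ℤ)) :=
  {l | (∀ s ∈ l, s ∈ S) ∧ (l.map Prod.snd).sum = 0 ∧
    ∀ i : ℕ, 0 < i → i ≤ l.length →
      ¬(((l.take i).map Prod.snd).sum = 0 ∧ ((l.take i).map Prod.fst).sum ≤ 0)}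

/-- Paths that visit the half line `{(-k,0) : k ≥ 0}` only at their endpoint
(after the start). -/
def bSet (S : Finset (ℤ × ℤ)) : Set (List (ℤ × ℤ)) :=
  {l | l ≠ [] ∧ (∀ s ∈ l, s ∈ S) ∧
    (l.map Prod.snd).sum = 0 ∧ (l.map Prod.fst).sum ≤ 0 ∧
    ∀ i : ℕ, 0 < i → i < l.length →
      ¬(((l.take i).map Prod.snd).sum = 0 ∧ ((l.take i).map Prod.fst).sum ≤ 0)}

/-! Every bilateral walk either avoids the slit `{(-k, 0) : k ≥ 0}` after its start, and is
then a slit-plane walk ending on the `x`-axis, or it splits uniquely, at its first visit to the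
slit, into a path counted by `B` followed by an arbitrary bilateral walk.
Hence `S_x = S₀ + B · S_x`. -/

theorem List.finite_setOf_forall_mem_length_eq {α : Type*} {S : Set α} (hS : S.Finite)
    {P : Set (List α)} (hP : ∀ l ∈ P, ∀ s ∈ l, s ∈ S) (n : ℕ) :
    {l | l ∈ P ∧ l.length = n}.Finite := by
  have := hS.to_subtype
  refine ((List.finite_length_eq S n).image (List.map Subtype.val)).subset ?_
  rintro l ⟨hl, rfl⟩
  lift l to List S using hP l hl
  exact ⟨l, (List.length_map _).symm, rfl⟩

section walksGF

variable {A B : Set (List (ℤ × ℤ))} (hA : ∀ n, {l | l ∈ A ∧ l.length = n}.Finite)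
  (hB : ∀ n, {l | l ∈ B ∧ l.length = n}.Finite)
include hA hB

theorem walksGF_union (hAB : Disjoint A B) : walksGF (A ∪ B) = walksGF A + walksGF B := by
  ext n : 1
  have hlevel : {l | l ∈ A ∪ B ∧ l.length = n} =
      {l | l ∈ A ∧ l.length = n} ∪ {l | l ∈ B ∧ l.length = n} := by
    ext l; simp only [Set.mem_union, Set.mem_ofPred_eq, or_and_right]
  rw [map_add, walksGF, walksGF, walksGF, PowerSeries.coeff_mk, PowerSeries.coeff_mk,
    PowerSeries.coeff_mk, hlevel,
    finsum_mem_union (hAB.mono (fun _ h => h.1) (fun _ h => h.1)) (hA n) (hB n)]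

theorem walksGF_image2_append (hinj : Set.InjOn (fun p => p.1 ++ p.2) (A ×ˢ B)) :
    walksGF (Set.image2 (· ++ ·) A B) = walksGF A * walksGF B := by
  ext n : 1
  rw [PowerSeries.coeff_mul]
  have hprod (p : ℕ × ℕ) :
      PowerSeries.coeff p.1 (walksGF A) * PowerSeries.coeff p.2 (walksGF B) =
      ∑ q ∈ (hA p.1).toFinset ×ˢ (hB p.2).toFinset,
        LaurentPolynomial.T ((q.1 ++ q.2).map Prod.fst).sum := by
    rw [walksGF, walksGF, PowerSeries.coeff_mk, PowerSeries.coeff_mk,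
      finsum_mem_eq_finite_toFinset_sum _ (hA p.1), finsum_mem_eq_finite_toFinset_sum _ (hB p.2),
      Finset.sum_mul_sum, Finset.sum_product]
    simp only [List.map_append, List.sum_append, LaurentPolynomial.T_add]
  simp only [hprod]
  rw [Finset.sum_sigma', ← finsum_mem_coe_finset, walksGF, PowerSeries.coeff_mk]
  symm
  refine finsum_mem_eq_of_bijOn (fun x => x.2.1 ++ x.2.2) ⟨?_, ?_, ?_⟩ fun _ _ => rfl
  · rintro ⟨⟨i, j⟩, u, v⟩ h
    simp only [Finset.coe_sigma, Set.mem_sigma_iff, Finset.mem_coe,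
      Finset.HasAntidiagonal.mem_antidiagonal, Finset.mem_product, Set.Finite.mem_toFinset,
      Set.mem_ofPred_eq] at h
    obtain ⟨hp, ⟨hu, rfl⟩, hv, rfl⟩ := h
    exact ⟨Set.mem_image2_of_mem hu hv, by simpa using hp⟩
  · rintro ⟨⟨i, j⟩, u, v⟩ h ⟨⟨i', j'⟩, u', v'⟩ h' huv
    simp only [Finset.coe_sigma, Set.mem_sigma_iff, Finset.mem_coe,
      Finset.HasAntidiagonal.mem_antidiagonal, Finset.mem_product, Set.Finite.mem_toFinset,
      Set.mem_ofPred_eq] at h h'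
    obtain ⟨-, ⟨hu, rfl⟩, hv, rfl⟩ := h
    obtain ⟨-, ⟨hu', rfl⟩, hv', rfl⟩ := h'
    obtain ⟨rfl, rfl⟩ := Prod.ext_iff.1 (hinj ⟨hu, hv⟩ ⟨hu', hv'⟩ huv)
    rfl
  · rintro _ ⟨⟨u, hu, v, hv, rfl⟩, hn⟩
    refine ⟨⟨(u.length, v.length), u, v⟩, ?_, rfl⟩
    simp only [Finset.coe_sigma, Set.mem_sigma_iff, Finset.mem_coe,
      Finset.HasAntidiagonal.mem_antidiagonal, Finset.mem_product, Set.Finite.mem_toFinset,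
      Set.mem_ofPred_eq]
    simpa [hu, hv] using hn

end walksGF

def OnSlitAfter (l : List (ℤ × ℤ)) (i : ℕ) : Prop :=
  ((l.take i).map Prod.snd).sum = 0 ∧ ((l.take i).map Prod.fst).sum ≤ 0

theorem onSlitAfter_append_of_le {u : List (ℤ × ℤ)} (v : List (ℤ × ℤ)) {i : ℕ}
    (hi : i ≤ u.length) : OnSlitAfter (u ++ v) i ↔ OnSlitAfter u i := by
  rw [OnSlitAfter, OnSlitAfter, List.take_append_of_le_length hi]

section slit

variable {S : Finset (ℤ × ℤ)} {u v l : List (ℤ × ℤ)}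

theorem onSlitAfter_length_of_mem_bSet (hu : u ∈ bSet S) : OnSlitAfter u u.length := by
  rw [OnSlitAfter, List.take_length]
  exact ⟨hu.2.2.1, hu.2.2.2.1⟩

theorem eq_of_prefix_of_mem_bSet (hu : u ∈ bSet S) (hl : l ∈ bSet S) (h : u <+: l) : u = l := by
  refine h.eq_of_length (h.length_le.eq_of_not_lt fun hlt => ?_)
  refine hl.2.2.2.2 u.length (List.length_pos_iff.2 hu.1) hlt ?_
  rw [← List.prefix_iff_eq_take.1 h]
  exact ⟨hu.2.2.1, hu.2.2.2.1⟩

theorem injOn_append_bSet_bilateralSet :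
    Set.InjOn (fun p => p.1 ++ p.2) (bSet S ×ˢ bilateralSet S) := by
  rintro ⟨u, v⟩ ⟨hu, -⟩ ⟨u', v'⟩ ⟨hu', -⟩ h
  dsimp only at h
  obtain rfl : u = u' := by
    rcases List.prefix_or_prefix_of_prefix (List.prefix_append u v)
      (h ▸ List.prefix_append u' v') with h | h
    · exact eq_of_prefix_of_mem_bSet hu hu' h
    · exact (eq_of_prefix_of_mem_bSet hu' hu h).symm
  rw [List.append_cancel_left h]

theorem append_mem_bilateralSet (hu : u ∈ bSet S) (hv : v ∈ bilateralSet S) :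
    u ++ v ∈ bilateralSet S := by
  refine ⟨fun s hs => (List.mem_append.1 hs).elim (hu.2.1 s) (hv.1 s), ?_⟩
  rw [List.map_append, List.sum_append, hu.2.2.1, hv.2, add_zero]

theorem append_notMem_slitAxisSet (hu : u ∈ bSet S) : u ++ v ∉ slitAxisSet S := fun h =>
  h.2.2 u.length (List.length_pos_iff.2 hu.1) (by simp)
    ((onSlitAfter_append_of_le v le_rfl).2 (onSlitAfter_length_of_mem_bSet hu))

theorem exists_append_of_notMem_slitAxisSet (hl : l ∈ bilateralSet S)
    (hns : l ∉ slitAxisSet S) :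
    ∃ u ∈ bSet S, ∃ v ∈ bilateralSet S, u ++ v = l := by
  classical
  have hex : ∃ i, 0 < i ∧ i ≤ l.length ∧ OnSlitAfter l i := by
    by_contra! h
    exact hns ⟨hl.1, hl.2, h⟩
  set k := Nat.find hex
  obtain ⟨hk, hkl, hy, hx⟩ : 0 < k ∧ k ≤ l.length ∧ OnSlitAfter l k := Nat.find_spec hex
  have hlen : (l.take k).length = k := List.length_take_of_le hkl
  refine ⟨l.take k, ⟨?_, fun s hs => hl.1 s (List.take_subset _ _ hs), hy, hx, ?_⟩,
    l.drop k, ⟨fun s hs => hl.1 s (List.drop_subset _ _ hs), ?_⟩, List.take_append_drop _ _⟩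
  · exact List.length_pos_iff.1 (by omega)
  · intro i hi0 hi hon
    rw [hlen] at hi
    rw [List.take_take, min_eq_left hi.le] at hon
    exact Nat.find_min hex hi ⟨hi0, by omega, hon⟩
  · have := congrArg (fun l => (l.map Prod.snd).sum) (List.take_append_drop k l)
    simp only [List.map_append, List.sum_append, hy, zero_add] at this
    exact this.trans hl.2

theorem slitAxisSet_subset_bilateralSet : slitAxisSet S ⊆ bilateralSet S :=
  fun _ hl => ⟨hl.1, hl.2.1⟩

theorem bSet_subset_bilateralSet : bSet S ⊆ bilateralSet S :=
  fun _ hl => ⟨hl.2.1, hl.2.2.1⟩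

theorem image2_append_subset_bilateralSet :
    Set.image2 (· ++ ·) (bSet S) (bilateralSet S) ⊆ bilateralSet S := by
  rintro _ ⟨u, hu, v, hv, rfl⟩
  exact append_mem_bilateralSet hu hv

theorem bilateralSet_eq_union :
    bilateralSet S = slitAxisSet S ∪ Set.image2 (· ++ ·) (bSet S) (bilateralSet S) := by
  refine Set.Subset.antisymm (fun l hl => ?_)
    (Set.union_subset slitAxisSet_subset_bilateralSet image2_append_subset_bilateralSet)
  by_cases hs : l ∈ slitAxisSet S
  · exact Or.inl hs
  · exact Or.inr (exists_append_of_notMem_slitAxisSet hl hs)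

theorem disjoint_slitAxisSet_image2_append :
    Disjoint (slitAxisSet S) (Set.image2 (· ++ ·) (bSet S) (bilateralSet S)) := by
  rw [Set.disjoint_right]
  rintro _ ⟨u, hu, v, -, rfl⟩
  exact append_notMem_slitAxisSet hu

end slit

theorem walksGF_bilateralSet (S : Finset (ℤ × ℤ)) :
    walksGF (bilateralSet S) =
      walksGF (slitAxisSet S) + walksGF (bSet S) * walksGF (bilateralSet S) := by
  have hfin {P : Set (List (ℤ × ℤ))} (hP : P ⊆ bilateralSet S) :=
    List.finite_setOf_forall_mem_length_eq S.finite_toSet fun l hl => (hP hl).1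
  rw [← walksGF_image2_append (hfin bSet_subset_bilateralSet) (hfin le_rfl)
      injOn_append_bSet_bilateralSet,
    ← walksGF_union (hfin slitAxisSet_subset_bilateralSet)
      (hfin image2_append_subset_bilateralSet) disjoint_slitAxisSet_image2_append,
    ← bilateralSet_eq_union]

/-- **The slit plane factorization (equation (1)).**
For a finite step set `𝔖`, with `S₀(x,t)` the generating function of walks on
the slit plane ending on the `x`-axis, `B(x⁻¹,t)` the generating function of
paths hitting `{(-k,0) : k ≥ 0}` only at their endpoint, and `S_x(x;t)` the
generating function of bilateral walks, one has
`S₀(x,t) · 1/(1 - B(x⁻¹,t)) = S_x(x;t)`, stated in the cross-multiplied form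
`S₀ = S_x · (1 - B)`. -/
theorem slit_plane_factorization (S : Finset (ℤ × ℤ)) :
    walksGF (slitAxisSet S) = walksGF (bilateralSet S) * (1 - walksGF (bSet S)) := by
  linear_combination -walksGF_bilateralSet S
end
end
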